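/- arXiv:1901.02906 — 10 statements merged into one kernel-verified Lean document; each statement's English description precedes it below -/
import Mathlib

section
/- Let p be an (m,n)-parking word and suppose x ∈ V^m is a fixed point of the action of p. Then the multiset of coordinates of x, taken modulo m, is invariant under addition of n modulo m; hence it is invariant under addition of d = gcd(m,n) modulo m. -/
/-!
A letter adds `m` to one coordinate and `-1` to all of them, then permutes them; modulo `m`
this translates the multiset of residues by `-1`. A word of length `n` therefore translates it
by `-n`, so at a fixed point it is invariant under translation by `n`. The translations fixing a
multiset form a subgroup, which also contains `m ≡ 0` and hence `gcd m n = a m + b n`.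
-/

def IsParkingWord (m n : ℕ) (p : Fin n → ℕ) : Prop :=
  (∀ j, p j < m) ∧
  ∀ i : ℕ, 1 ≤ i → i ≤ m →
    i * n ≤ m * (Finset.univ.filter (fun j => p j < i)).card

noncomputable def sortTuple {m : ℕ} (x : Fin m → ℝ) : Fin m → ℝ :=
  x ∘ Tuple.sort x

noncomputable def letterAct (m : ℕ) (i : Fin m) (x : Fin m → ℝ) : Fin m → ℝ :=
  sortTuple (fun j => x j + (if j = i then (m : ℝ) else 0) - 1)

noncomputable def wordAct {m n : ℕ} (w : Fin n → Fin m) (x : Fin m → ℝ) : Fin m → ℝ :=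
  (List.ofFn w).foldl (fun y i => letterAct m i y) x

def Vm (m : ℕ) : Set (Fin m → ℝ) :=
  {x | (∑ j, x j) = 0 ∧ Monotone x}

/-- The multiset of residues modulo `m` of the coordinates of `x`. -/
noncomputable def resMultiset (m : ℕ) (x : Fin m → ℝ) : Multiset (AddCircle (m : ℝ)) :=
  Multiset.map (fun j => ((x j : ℝ) : AddCircle (m : ℝ))) Finset.univ.val

section TranslationStabilizer

variable {A : Type*} [AddCommGroup A]

def translationStabilizer (s : Multiset A) : AddSubgroup A where
  carrier := {a | s.map (· + a) = s}
  zero_mem' := by simp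
  add_mem' {a b} ha hb :=
    calc s.map (· + (a + b)) = (s.map (· + a)).map (· + b) := by
          simp only [Multiset.map_map, Function.comp_def, add_assoc]
      _ = s := by rw [ha, hb]
  neg_mem' {a} ha := by
    change s.map (· + -a) = s
    conv_lhs => rw [← ha]
    simp [Multiset.map_map]

theorem mem_translationStabilizer {s : Multiset A} {a : A} :
    a ∈ translationStabilizer s ↔ s.map (· + a) = s :=
  Iff.rfl

end TranslationStabilizer

theorem resMultiset_comp_perm (m : ℕ) (x : Fin m → ℝ) (σ : Equiv.Perm (Fin m)) :
    resMultiset m (x ∘ σ) = resMultiset m x := by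
  conv_rhs => rw [resMultiset, ← Multiset.map_univ_val_equiv σ, Multiset.map_map]
  rfl

theorem resMultiset_sortTuple (m : ℕ) (x : Fin m → ℝ) :
    resMultiset m (sortTuple x) = resMultiset m x :=
  resMultiset_comp_perm m x (Tuple.sort x)

theorem resMultiset_letterAct (m : ℕ) (i : Fin m) (x : Fin m → ℝ) :
    resMultiset m (letterAct m i x)
      = (resMultiset m x).map (· - ((1 : ℝ) : AddCircle (m : ℝ))) := by
  rw [letterAct, resMultiset_sortTuple, resMultiset, resMultiset, Multiset.map_map]
  refine Multiset.map_congr rfl fun j _ => ?_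
  have hperiod : (((if j = i then (m : ℝ) else 0) : ℝ) : AddCircle (m : ℝ)) = 0 := by
    split_ifs
    · exact AddCircle.coe_period (p := (m : ℝ))
    · rfl
  simp only [Function.comp_apply, AddCircle.coe_sub, AddCircle.coe_add, hperiod, add_zero]

theorem resMultiset_foldl_letterAct (m : ℕ) (l : List (Fin m)) (x : Fin m → ℝ) :
    resMultiset m (l.foldl (fun y i => letterAct m i y) x)
      = (resMultiset m x).map (· - ((l.length : ℝ) : AddCircle (m : ℝ))) := by
  induction l generalizing x with
  | nil => simp
  | cons a l ih =>
    rw [List.foldl_cons, ih, resMultiset_letterAct, Multiset.map_map]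
    refine Multiset.map_congr rfl fun z _ => ?_
    simp only [Function.comp_apply, List.length_cons, Nat.cast_succ, AddCircle.coe_add]
    abel

theorem resMultiset_wordAct {m n : ℕ} (w : Fin n → Fin m) (x : Fin m → ℝ) :
    resMultiset m (wordAct w x)
      = (resMultiset m x).map (· - ((n : ℝ) : AddCircle (m : ℝ))) := by
  rw [wordAct, resMultiset_foldl_letterAct, List.length_ofFn]

theorem fixed_point_residues_invariant_general (m n : ℕ) (p : Fin n → Fin m)
    (x : Fin m → ℝ) (hfix : wordAct p x = x) :
    (resMultiset m x).map (fun z => z + ((n : ℝ) : AddCircle (m : ℝ))) = resMultiset m x ∧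
    (resMultiset m x).map
        (fun z => z + (((Nat.gcd m n : ℕ) : ℝ) : AddCircle (m : ℝ))) = resMultiset m x := by
  set S := translationStabilizer (resMultiset m x)
  have hn : ((n : ℝ) : AddCircle (m : ℝ)) ∈ S := by
    rw [mem_translationStabilizer]
    conv_lhs => rw [← hfix, resMultiset_wordAct]
    simp [Multiset.map_map]
  have hm : ((m : ℝ) : AddCircle (m : ℝ)) ∈ S := by
    rw [AddCircle.coe_period]
    exact S.zero_mem
  have hgcd : (((Nat.gcd m n : ℕ) : ℝ) : AddCircle (m : ℝ))
      = Nat.gcdA m n • ((m : ℝ) : AddCircle (m : ℝ))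
        + Nat.gcdB m n • ((n : ℝ) : AddCircle (m : ℝ)) := by
    have h := congrArg (fun k : ℤ => ((k : ℝ) : AddCircle (m : ℝ))) (Nat.gcd_eq_gcd_ab m n)
    push_cast at h
    rw [h, ← AddCircle.coe_zsmul, ← AddCircle.coe_zsmul, ← AddCircle.coe_add, zsmul_eq_mul,
      zsmul_eq_mul, mul_comm (m : ℝ), mul_comm (n : ℝ)]
  refine ⟨hn, ?_⟩
  rw [← mem_translationStabilizer, hgcd]
  exact S.add_mem (S.zsmul_mem hm _) (S.zsmul_mem hn _)

/-- If `x ∈ V^m` is a fixed point of an (m,n)-parking word `p`, then the multiset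
of coordinates of `x` modulo `m` is invariant under addition of `n`, hence under
addition of `gcd(m,n)`. -/
theorem fixed_point_residues_invariant (m n : ℕ) (p : Fin n → Fin m)
    (hp : IsParkingWord m n (fun j => (p j : ℕ)))
    (x : Fin m → ℝ) (hx : x ∈ Vm m) (hfix : wordAct p x = x) :
    (resMultiset m x).map (fun z => z + ((n : ℝ) : AddCircle (m : ℝ))) = resMultiset m x ∧
    (resMultiset m x).map
        (fun z => z + (((Nat.gcd m n : ℕ) : ℝ) : AddCircle (m : ℝ))) = resMultiset m x :=
  fixed_point_residues_invariant_general m n p x hfix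
end

section
/- Let w ∈ [m]^n be a word that is not an (m,n)-parking word. Then the action of w on V^m has no fixed point; moreover, for every x ∈ V^m, the norm of the iterates w^k(x) tends to infinity as k → ∞. -/
open Finset

/-- index bound for order embeddings of Fin. -/
lemma le_emb {c m : ℕ} (f : Fin c ↪o Fin m) (k : Fin c) : (k : ℕ) ≤ (f k : ℕ) := by
  have H : ∀ N : ℕ, ∀ k : Fin c, (k : ℕ) = N → N ≤ (f k : ℕ) := by
    intro N
    induction N with
    | zero => intro k _; exact Nat.zero_le _
    | succ N ih =>
      intro k hk
      have hN : N < c := by omega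
      have h1 : (⟨N, hN⟩ : Fin c) < k := by simp [Fin.lt_def, hk]
      have h2 : (f ⟨N, hN⟩ : ℕ) < (f k : ℕ) := f.strictMono h1
      have h3 := ih ⟨N, hN⟩ rfl
      omega
  exact H _ k rfl

lemma pref_eq_image {m i : ℕ} (him : i ≤ m) :
    Finset.univ.filter (fun j : Fin m => (j : ℕ) < i)
      = Finset.univ.image (Fin.castLE him) := by
  ext j
  simp only [mem_filter, mem_univ, true_and, mem_image]
  constructor
  · intro hj; exact ⟨⟨(j : ℕ), hj⟩, by ext; simp⟩
  · rintro ⟨k, rfl⟩; exact k.2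

lemma pref_card {m i : ℕ} (him : i ≤ m) :
    (Finset.univ.filter (fun j : Fin m => (j : ℕ) < i)).card = i := by
  rw [pref_eq_image him, Finset.card_image_of_injective _ (Fin.castLE_injective him)]
  simp

lemma sum_pref_min {m i : ℕ} (him : i ≤ m) (y : Fin m → ℝ) (hy : Monotone y)
    (T : Finset (Fin m)) (hT : T.card = i) :
    ∑ j ∈ Finset.univ.filter (fun j : Fin m => (j : ℕ) < i), y j ≤ ∑ j ∈ T, y j := by
  have himg : Finset.univ.image (T.orderEmbOfFin hT) = T := by
    apply Finset.eq_of_subset_of_card_le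
    · intro j hj
      simp only [mem_image] at hj
      obtain ⟨k, -, rfl⟩ := hj
      exact T.orderEmbOfFin_mem hT k
    · rw [Finset.card_image_of_injective _ (T.orderEmbOfFin hT).injective]
      simp [hT]
  rw [pref_eq_image him, Finset.sum_image (fun a _ b _ h => Fin.castLE_injective him h),
    ← himg, Finset.sum_image (fun a _ b _ h => (T.orderEmbOfFin hT).injective h)]
  apply Finset.sum_le_sum
  intro k _
  apply hy
  have := le_emb (T.orderEmbOfFin hT) k
  exact Fin.le_def.mpr (by simpa using this)

/-- The norm `|x| = ∑_{i<j} (x_j - x_i)^2`. -/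
def normSq {m : ℕ} (x : Fin m → ℝ) : ℝ :=
  ∑ i, ∑ j, if i < j then (x j - x i) ^ 2 else 0

noncomputable def Phi (m i : ℕ) (x : Fin m → ℝ) : ℝ :=
  ∑ j ∈ Finset.univ.filter (fun j : Fin m => (j : ℕ) < i), x j

lemma Phi_sortTuple_le {m i : ℕ} (him : i ≤ m) (z : Fin m → ℝ) :
    Phi m i (sortTuple z) ≤ Phi m i z := by
  set σ := Tuple.sort z with hσ
  have hy : Monotone (sortTuple z) := Tuple.monotone_sort z
  have hz : ∀ j, z j = sortTuple z (σ.symm j) := by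
    intro j; simp [sortTuple, ← hσ]
  set P := Finset.univ.filter (fun j : Fin m => (j : ℕ) < i) with hP
  have hcard : (P.image σ.symm).card = i := by
    rw [Finset.card_image_of_injective _ σ.symm.injective, hP, pref_card him]
  calc Phi m i (sortTuple z) ≤ ∑ j ∈ P.image σ.symm, sortTuple z j :=
        sum_pref_min him _ hy _ hcard
    _ = ∑ j ∈ P, sortTuple z (σ.symm j) :=
        Finset.sum_image (fun a _ b _ h => σ.symm.injective h)
    _ = ∑ j ∈ P, z j := by
        refine Finset.sum_congr rfl fun j _ => ?_
        rw [← hz]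
    _ = Phi m i z := rfl

lemma Phi_letterAct_le {m i : ℕ} (him : i ≤ m) (a : Fin m) (x : Fin m → ℝ) :
    Phi m i (letterAct m a x)
      ≤ Phi m i x - i + (if (a : ℕ) < i then (m : ℝ) else 0) := by
  refine (Phi_sortTuple_le him _).trans_eq ?_
  rw [Phi, Phi]
  rw [Finset.sum_sub_distrib, Finset.sum_add_distrib, Finset.sum_const, pref_card him,
    Finset.sum_ite_eq' _ a (fun _ => (m : ℝ))]
  have : a ∈ Finset.univ.filter (fun j : Fin m => (j : ℕ) < i) ↔ (a : ℕ) < i := by simp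
  rw [if_congr this rfl rfl]
  ring

lemma Phi_foldl_le {m i : ℕ} (him : i ≤ m) (l : List (Fin m)) (x : Fin m → ℝ) :
    Phi m i (l.foldl (fun y a => letterAct m a y) x)
      ≤ Phi m i x + (l.map (fun a : Fin m => (if (a : ℕ) < i then (m : ℝ) else 0) - i)).sum := by
  induction l generalizing x with
  | nil => simp
  | cons a l ih =>
    simp only [List.foldl_cons, List.map_cons, List.sum_cons]
    calc Phi m i (l.foldl (fun y a => letterAct m a y) (letterAct m a x))
        ≤ Phi m i (letterAct m a x)
            + (l.map (fun a : Fin m => (if (a : ℕ) < i then (m : ℝ) else 0) - i)).sum := ih _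
      _ ≤ Phi m i x - i + (if (a : ℕ) < i then (m : ℝ) else 0)
            + (l.map (fun a : Fin m => (if (a : ℕ) < i then (m : ℝ) else 0) - i)).sum := by
            have := Phi_letterAct_le him a x; linarith
      _ = _ := by ring

lemma Phi_wordAct_le {m n i : ℕ} (him : i ≤ m) (w : Fin n → Fin m) (x : Fin m → ℝ) :
    Phi m i (wordAct w x)
      ≤ Phi m i x
        + ((m : ℝ) * (Finset.univ.filter (fun j => ((w j : ℕ)) < i)).card - i * n) := by
  have h := Phi_foldl_le him (List.ofFn w) x
  rw [wordAct]
  refine h.trans_eq ?_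
  rw [List.map_ofFn, List.sum_ofFn]
  congr 1
  simp only [Function.comp_apply]
  rw [Finset.sum_sub_distrib, Finset.sum_const, Finset.card_univ, Fintype.card_fin]
  congr 1
  · rw [Finset.sum_ite, Finset.sum_const, Finset.sum_const_zero, add_zero, nsmul_eq_mul,
      mul_comm]
  · simp [mul_comm]

lemma sum_letterAct (m : ℕ) (a : Fin m) (x : Fin m → ℝ) :
    ∑ j, letterAct m a x j = ∑ j, x j := by
  rw [letterAct]
  have : ∑ j, sortTuple (fun j => x j + (if j = a then (m : ℝ) else 0) - 1) j
      = ∑ j, (x j + (if j = a then (m : ℝ) else 0) - 1) := by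
    rw [sortTuple]
    exact Fintype.sum_equiv (Tuple.sort _) _ _ (fun j => rfl)
  rw [this, Finset.sum_sub_distrib, Finset.sum_add_distrib, Finset.sum_const,
    Finset.card_univ, Fintype.card_fin, Finset.sum_ite_eq' _ a (fun _ => (m : ℝ))]
  simp

lemma sum_wordAct {m n : ℕ} (w : Fin n → Fin m) (x : Fin m → ℝ) :
    ∑ j, wordAct w x j = ∑ j, x j := by
  rw [wordAct]
  generalize List.ofFn w = l
  induction l generalizing x with
  | nil => rfl
  | cons a l ih => rw [List.foldl_cons, ih, sum_letterAct]

lemma normSq_eq {m : ℕ} (x : Fin m → ℝ) (hx : ∑ j, x j = 0) :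
    normSq x = m * ∑ j, x j ^ 2 := by
  have hswap : (∑ i, ∑ j, if i < j then (x j - x i) ^ 2 else 0)
      = ∑ i, ∑ j, if j < i then (x j - x i) ^ 2 else 0 := by
    rw [Finset.sum_comm]
    refine Finset.sum_congr rfl fun j _ => Finset.sum_congr rfl fun i _ => ?_
    congr 1
    ring
  have hfull : normSq x + normSq x = ∑ i, ∑ j, (x j - x i) ^ 2 := by
    rw [normSq]
    nth_rewrite 2 [hswap]
    rw [← Finset.sum_add_distrib]
    refine Finset.sum_congr rfl fun i _ => ?_
    rw [← Finset.sum_add_distrib]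
    refine Finset.sum_congr rfl fun j _ => ?_
    rcases lt_trichotomy i j with h | h | h
    · rw [if_pos h, if_neg (asymm h), add_zero]
    · subst h; simp
    · rw [if_neg (asymm h), if_pos h, zero_add]
  have hrow : ∀ i : Fin m, ∑ j, (x j - x i) ^ 2
      = (∑ j, x j ^ 2) - 2 * x i * (∑ j, x j) + m * x i ^ 2 := by
    intro i
    have : ∀ j : Fin m, (x j - x i) ^ 2 = x j ^ 2 - (2 * x i) * x j + x i ^ 2 := by
      intro j; ring
    rw [Finset.sum_congr rfl fun j _ => this j, Finset.sum_add_distrib,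
      Finset.sum_sub_distrib, ← Finset.mul_sum, Finset.sum_const, Finset.card_univ,
      Fintype.card_fin, nsmul_eq_mul]
  have hrow' : ∀ i : Fin m, ∑ j, (x j - x i) ^ 2
      = (∑ j, x j ^ 2) + m * x i ^ 2 := by
    intro i; rw [hrow i, hx]; ring
  have h2 : ∑ i, ∑ j, (x j - x i) ^ 2 = 2 * m * ∑ j, x j ^ 2 := by
    rw [Finset.sum_congr rfl fun i _ => hrow' i, Finset.sum_add_distrib, Finset.sum_const,
      Finset.card_univ, Fintype.card_fin, nsmul_eq_mul, ← Finset.mul_sum]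
    ring
  linarith [hfull, h2]

lemma Phi_sq_le {m i : ℕ} (him : i ≤ m) (x : Fin m → ℝ) (hx : ∑ j, x j = 0) :
    (Phi m i x) ^ 2 ≤ normSq x := by
  rw [normSq_eq x hx, Phi]
  set P := Finset.univ.filter (fun j : Fin m => (j : ℕ) < i) with hP
  have h1 : (∑ j ∈ P, x j) ^ 2 ≤ P.card * ∑ j ∈ P, x j ^ 2 :=
    sq_sum_le_card_mul_sum_sq
  have h2 : ∑ j ∈ P, x j ^ 2 ≤ ∑ j, x j ^ 2 :=
    Finset.sum_le_sum_of_subset_of_nonneg (Finset.subset_univ _)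
      (fun j _ _ => sq_nonneg _)
  have h3 : (P.card : ℝ) ≤ m := by
    rw [hP, pref_card him]; exact_mod_cast him
  have h4 : (0:ℝ) ≤ ∑ j ∈ P, x j ^ 2 := Finset.sum_nonneg fun j _ => sq_nonneg _
  calc (∑ j ∈ P, x j) ^ 2 ≤ P.card * ∑ j ∈ P, x j ^ 2 := h1
    _ ≤ m * ∑ j, x j ^ 2 := by
        exact mul_le_mul h3 h2 h4 (by positivity)

/-- A non-parking word has no fixed point on `V^m`; moreover its iterates send
every point of `V^m` off to infinity. -/
theorem non_parking_word_no_fixed_point (m n : ℕ) (w : Fin n → Fin m)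
    (hw : ¬ IsParkingWord m n (fun j => (w j : ℕ))) :
    (∀ x ∈ Vm m, wordAct w x ≠ x) ∧
    (∀ x ∈ Vm m,
      Filter.Tendsto (fun k => normSq ((fun y => wordAct w y)^[k] x))
        Filter.atTop Filter.atTop) := by
  rw [IsParkingWord] at hw
  push_neg at hw
  obtain ⟨i, hi1, him, hlt⟩ := hw (fun j => (w j).2)
  set c := (Finset.univ.filter (fun j => ((w j : ℕ)) < i)).card with hc
  set D : ℝ := (i : ℝ) * n - m * c with hD
  have hD1 : (1:ℝ) ≤ D := by
    have h : (m * c : ℕ) + 1 ≤ i * n := hlt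
    have h' : ((m * c : ℕ) : ℝ) + 1 ≤ ((i * n : ℕ) : ℝ) := by exact_mod_cast h
    push_cast at h'
    rw [hD]; linarith
  have hstep : ∀ y : Fin m → ℝ, Phi m i (wordAct w y) ≤ Phi m i y - D := by
    intro y
    have h := Phi_wordAct_le him w y
    rw [hD]
    rw [← hc] at h
    linarith
  constructor
  · intro x _ hfix
    have := hstep x
    rw [hfix] at this
    linarith
  · intro x hx
    set F := fun y : Fin m → ℝ => wordAct w y with hF
    have hsum : ∀ k, ∑ j, (F^[k] x) j = 0 := by
      intro k
      induction k with
      | zero => simpa using hx.1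
      | succ k ih =>
        rw [Function.iterate_succ_apply', hF]
        exact (sum_wordAct w _).trans ih
    have hphi : ∀ k : ℕ, Phi m i (F^[k] x) ≤ Phi m i x - k * D := by
      intro k
      induction k with
      | zero => simp
      | succ k ih =>
        rw [Function.iterate_succ_apply']
        have h := hstep (F^[k] x)
        push_cast
        simp only [hF] at h ⊢
        linarith
    have hg : Filter.Tendsto (fun k : ℕ => (k : ℝ) * D - Phi m i x)
        Filter.atTop Filter.atTop := by
      have h1 : Filter.Tendsto (fun k : ℕ => (k : ℝ) * D) Filter.atTop Filter.atTop :=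
        Filter.Tendsto.atTop_mul_const (by linarith) tendsto_natCast_atTop_atTop
      have h2 := Filter.tendsto_atTop_add_const_right Filter.atTop (-(Phi m i x)) h1
      simpa [sub_eq_add_neg] using h2
    refine Filter.tendsto_atTop_mono' _ ?_ hg
    filter_upwards [hg.eventually_ge_atTop 1] with k hk
    have h1 : Phi m i (F^[k] x) ≤ -((k:ℝ) * D - Phi m i x) := by
      have := hphi k; linarith
    have h2 : ((k:ℝ) * D - Phi m i x) ^ 2 ≤ (Phi m i (F^[k] x)) ^ 2 := by
      have hnn : (0:ℝ) ≤ (k:ℝ) * D - Phi m i x := by linarith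
      calc ((k:ℝ) * D - Phi m i x) ^ 2
          ≤ (-(Phi m i (F^[k] x))) ^ 2 := pow_le_pow_left₀ hnn (by linarith) 2
        _ = (Phi m i (F^[k] x)) ^ 2 := by ring
    have h3 := Phi_sq_le him (F^[k] x) (hsum k)
    have h4 : ((k:ℝ) * D - Phi m i x) ≤ ((k:ℝ) * D - Phi m i x) ^ 2 :=
      le_self_pow₀ (by linarith) two_ne_zero
    linarith
end

section
/- The number of (m,n)-parking words with gcd(m,n) = 1 is m^{n−1}. -/
/-!
For a word `w` put `S(i) = m * #{j | w j < i} - i * n`, so that `w` parks iff `S ≥ 0` on `[0, m]`.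
`S` is the sequence of partial sums of the `m`-periodic increments `m * #{j | w j = k} - n`, which
add up to zero over a period, and adding a constant `c` to every letter of `w` rotates these
increments by `c`. Hence the shift of `w` by `c` parks iff `-c` minimises `S` on `[0, m)`.
Since `S(i) ≡ -i * n (mod m)` and `m`, `n` are coprime, the values `S(0), …, S(m - 1)` are distinct,
so exactly one shift parks (the cycle lemma). The `m ^ n` words therefore fall into orbits of
size `m` under constant shifts, each containing exactly one parking word.
-/

open Finset Function

section CycleLemma

variable {f : ℕ → ℤ} {m : ℕ}

theorem periodic_sum_range (hf : Periodic f m) (hsum : ∑ k ∈ range m, f k = 0) :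
    Periodic (fun i => ∑ k ∈ range i, f k) m := by
  intro i
  simp only [add_comm i m, sum_range_add, hsum, zero_add]
  exact sum_congr rfl fun k _ => by rw [add_comm, hf]

theorem forall_sum_range_shift_nonneg_iff (hm : 0 < m) (hf : Periodic f m)
    (hsum : ∑ k ∈ range m, f k = 0) (d : ℕ) :
    (∀ i, 0 ≤ ∑ k ∈ range i, f (d + k)) ↔ ∀ i, ∑ k ∈ range d, f k ≤ ∑ k ∈ range i, f k := by
  have hshift (i : ℕ) :
      ∑ k ∈ range i, f (d + k) = ∑ k ∈ range (d + i), f k - ∑ k ∈ range d, f k := by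
    rw [sum_range_add]; ring
  simp only [hshift, sub_nonneg]
  refine ⟨fun h i => ?_, fun h i => h _⟩
  -- by periodicity, `i` may be replaced by an index beyond `d`
  have hi : d ≤ i + d * m := le_add_left (Nat.le_mul_of_pos_right d hm)
  have hper : ∑ k ∈ range (i + d * m), f k = ∑ k ∈ range i, f k := by
    simpa using (periodic_sum_range hf hsum).nat_mul d i
  simpa [Nat.add_sub_cancel' hi, hper] using h (i + d * m - d)

theorem injOn_sum_range {r : ℤ} (hr : IsCoprime (m : ℤ) r) (hmod : ∀ k, f k ≡ r [ZMOD m]) :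
    Set.InjOn (fun i => ∑ k ∈ range i, f k) (Set.Iio m) := by
  have hS (i : ℕ) : ∑ k ∈ range i, f k ≡ i * r [ZMOD m] := by
    simpa using Int.ModEq.sum (s := range i) fun k _ => hmod k
  intro i hi i' hi' (h : ∑ k ∈ range i, f k = ∑ k ∈ range i', f k)
  have hdvd : (m : ℤ) ∣ (i' - i) * r := by
    simpa [sub_mul] using ((hS i).symm.trans (h ▸ hS i')).dvd
  have := Int.eq_zero_of_abs_lt_dvd (hr.dvd_of_dvd_mul_right hdvd)
    (by simp only [Set.mem_Iio] at hi hi'; rw [abs_lt]; omega)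
  omega

theorem existsUnique_forall_sum_range_shift_nonneg (hm : 0 < m) (hf : Periodic f m)
    (hsum : ∑ k ∈ range m, f k = 0) {r : ℤ} (hr : IsCoprime (m : ℤ) r)
    (hmod : ∀ k, f k ≡ r [ZMOD m]) :
    ∃! d, d < m ∧ ∀ i, 0 ≤ ∑ k ∈ range i, f (d + k) := by
  simp only [forall_sum_range_shift_nonneg_iff hm hf hsum]
  obtain ⟨d, hd, hmin⟩ := exists_min_image (range m) (fun i => ∑ k ∈ range i, f k)
    (nonempty_range_iff.2 hm.ne')
  have hglobal : ∀ i, ∑ k ∈ range d, f k ≤ ∑ k ∈ range i, f k := fun i => by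
    rw [← (periodic_sum_range hf hsum).map_mod_nat i]
    exact hmin _ (mem_range.2 (Nat.mod_lt i hm))
  refine ⟨d, ⟨mem_range.1 hd, hglobal⟩, fun d' ⟨hd', hmin'⟩ => ?_⟩
  exact injOn_sum_range hr hmod hd' (mem_range.1 hd) (le_antisymm (hmin' d) (hglobal d'))

end CycleLemma

section Words

open Fin.NatCast

variable {m n : ℕ} [NeZero m]

def letterExcess (w : Fin n → Fin m) (k : ℕ) : ℤ := m * #{j | w j = (k : Fin m)} - n

theorem periodic_letterExcess (w : Fin n → Fin m) : Periodic (letterExcess w) m := by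
  intro k
  simp [letterExcess]

theorem letterExcess_modEq (w : Fin n → Fin m) (k : ℕ) : letterExcess w k ≡ -n [ZMOD m] := by
  simp [letterExcess, Int.ModEq]

theorem letterExcess_const_add (w : Fin n → Fin m) (c : Fin m) (k : ℕ) :
    letterExcess (fun j => c + w j) k = letterExcess w ((-c : Fin m) + k) := by
  simp only [letterExcess, Nat.cast_add, Fin.cast_val_eq_self, eq_neg_add_iff_add_eq]

theorem sum_range_letterExcess_of_le (w : Fin n → Fin m) {i : ℕ} (hi : i ≤ m) :
    ∑ k ∈ range i, letterExcess w k = m * #{j | (w j : ℕ) < i} - i * n := by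
  have hcount : ∑ k ∈ range i, #{j | w j = (k : Fin m)} = #{j | (w j : ℕ) < i} := by
    rw [← filter_congr (fun j _ => mem_range), ← sum_card_fiberwise_eq_card_filter]
    refine sum_congr rfl fun k hk => congrArg card (filter_congr fun j _ => ?_)
    rw [Fin.ext_iff, Fin.val_natCast, Nat.mod_eq_of_lt (by grind)]
  simp only [letterExcess, sum_sub_distrib, ← mul_sum, sum_const, card_range, nsmul_eq_mul]
  exact_mod_cast congrArg (fun x : ℕ => (m : ℤ) * x - i * n) hcount

theorem sum_range_letterExcess_self (w : Fin n → Fin m) :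
    ∑ k ∈ range m, letterExcess w k = 0 := by
  rw [sum_range_letterExcess_of_le w le_rfl, filter_true_of_mem fun j _ => (w j).isLt]
  simp

theorem isParkingWord_iff_forall_sum_range_letterExcess_nonneg (w : Fin n → Fin m) :
    IsParkingWord m n (fun j => w j) ↔ ∀ i, 0 ≤ ∑ k ∈ range i, letterExcess w k := by
  refine ⟨fun ⟨_, hpark⟩ i => ?_, fun h => ⟨fun j => (w j).isLt, fun i _ hi => ?_⟩⟩
  · have hS := periodic_sum_range (periodic_letterExcess w) (sum_range_letterExcess_self w)
    rw [← hS.map_mod_nat, sum_range_letterExcess_of_le w (Nat.mod_lt i (NeZero.pos m)).le,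
      sub_nonneg]
    rcases Nat.eq_zero_or_pos (i % m) with h0 | hpos
    · simp [h0]
    · exact_mod_cast hpark _ hpos (Nat.mod_lt i (NeZero.pos m)).le
  · have := h i
    rw [sum_range_letterExcess_of_le w hi, sub_nonneg] at this
    exact_mod_cast this

theorem existsUnique_isParkingWord_const_add (hcop : Nat.Coprime m n) (w : Fin n → Fin m) :
    ∃! c : Fin m, IsParkingWord m n (fun j => (c + w j : Fin m)) := by
  simp only [isParkingWord_iff_forall_sum_range_letterExcess_nonneg, letterExcess_const_add]
  obtain ⟨d, ⟨hd, hgood⟩, huniq⟩ := existsUnique_forall_sum_range_shift_nonneg (NeZero.pos m)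
    (periodic_letterExcess w) (sum_range_letterExcess_self w)
    (Nat.isCoprime_iff_coprime.2 hcop).neg_right (letterExcess_modEq w)
  refine ⟨-(d : Fin m), by simpa [Nat.mod_eq_of_lt hd] using hgood, fun c hc => ?_⟩
  rw [← neg_neg c, ← Fin.cast_val_eq_self (-c), huniq _ ⟨(-c).isLt, hc⟩]

end Words

theorem card_eq_card_subtype_mul_card_of_existsUnique_vadd {G X : Type*} [AddGroup G]
    [AddAction G X] {P : X → Prop} (h : ∀ x, ∃! g : G, P (g +ᵥ x)) :
    Nat.card X = Nat.card {x // P x} * Nat.card G := by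
  rw [← Nat.card_prod]
  refine (Nat.card_eq_of_bijective (fun q : {x // P x} × G => -q.2 +ᵥ (q.1 : X)) ⟨?_, ?_⟩).symm
  · rintro ⟨⟨x, hx⟩, g⟩ ⟨⟨x', hx'⟩, g'⟩ (hxx' : -g +ᵥ x = -g' +ᵥ x')
    have hx_eq : x = (g + -g') +ᵥ x' := by rw [add_vadd, ← hxx', vadd_neg_vadd]
    have hg : g + -g' = 0 := (h x').unique (hx_eq ▸ hx) (by rwa [zero_vadd])
    obtain rfl : g = g' := add_neg_eq_zero.1 hg
    simp_all
  · intro y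
    obtain ⟨g, hg, -⟩ := h y
    exact ⟨(⟨g +ᵥ y, hg⟩, g), neg_vadd_vadd g y⟩

def parkingWordEquivFin (m n : ℕ) :
    {p : Fin n → ℕ // IsParkingWord m n p} ≃
      {w : Fin n → Fin m // IsParkingWord m n (fun j => w j)} where
  toFun p := ⟨fun j => ⟨p.1 j, p.2.1 j⟩, p.2⟩
  invFun w := ⟨fun j => w.1 j, w.2⟩
  left_inv _ := rfl
  right_inv _ := rfl

theorem card_parking_words_general (m n : ℕ) (hm : 0 < m)
    (hcop : Nat.Coprime m n) :
    Nat.card {p : Fin n → ℕ // IsParkingWord m n p} = m ^ (n - 1) := by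
  have : NeZero m := ⟨hm.ne'⟩
  have hwords : Nat.card {w : Fin n → Fin m // IsParkingWord m n (fun j => w j)} * m = m ^ n := by
    simpa using (card_eq_card_subtype_mul_card_of_existsUnique_vadd
      (P := fun w : Fin n → Fin m => IsParkingWord m n (fun j => w j))
      (existsUnique_isParkingWord_const_add hcop)).symm
  rw [Nat.card_congr (parkingWordEquivFin m n)]
  rcases n with _ | n
  · simpa using (mul_eq_one.1 (hwords.trans (pow_zero m))).1
  · exact Nat.eq_of_mul_eq_mul_right hm (by rw [hwords, Nat.add_sub_cancel, pow_succ])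

/-- For `m`, `n` coprime, there are `m^(n-1)` many (m,n)-parking words. -/
theorem card_parking_words (m n : ℕ) (hm : 0 < m) (hn : 0 < n)
    (hcop : Nat.Coprime m n) :
    Nat.card {p : Fin n → ℕ // IsParkingWord m n p} = m ^ (n - 1) :=
  card_parking_words_general m n hm hcop
end

section
/- The number of weakly increasing (m,n)-parking words (i.e., (m,n)-Dyck words) with gcd(m,n) = 1 equals the rational Catalan number (1/(m+n))·C(m+n, n). -/
/-!
Encode a monotone word `p : Fin n → ℕ` by the positions `p j + j` of the east steps of its
lattice path: an `n`-subset `S` of `ZMod N`, where `N = m + n`. For monotone `p`, the parking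
condition says exactly that the height `N * #{x < a | x mod N ∈ S} - n * a` is nonnegative for
all `a`. The height is `N`-periodic in `a` and congruent to `-n * a` modulo `N`, so for `n`
coprime to `N` its values at `0, …, N - 1` are pairwise distinct. Hence exactly one of the `N`
rotations of `S` starts at the minimum of the height, i.e. is a Dyck path (the cycle lemma),
and `ZMod N × {Dyck subsets}` is in bijection with the `n`-subsets of `ZMod N`.
-/

open Finset
open scoped Pointwise

theorem AddAction.card_mul_card_eq_of_existsUnique_vadd_mem {G X : Type*} [AddGroup G]
    [AddAction G X] (D : Set X) (h : ∀ x, ∃! g : G, g +ᵥ x ∈ D) :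
    Nat.card G * Nat.card D = Nat.card X := by
  rw [← Nat.card_prod]
  refine Nat.card_eq_of_bijective (fun gd => -gd.1 +ᵥ (gd.2 : X)) ⟨?_, fun x => ?_⟩
  · rintro ⟨g, d, hd⟩ ⟨g', d', hd'⟩ hx
    obtain ⟨_, -, huniq⟩ := h (-g +ᵥ d)
    have hg : g = g' :=
      (huniq g (by simpa using hd)).trans (huniq g' (by simpa [hx] using hd')).symm
    subst hg
    simpa using hx
  · obtain ⟨g, hg, -⟩ := h x
    exact ⟨(g, ⟨_, hg⟩), by simp⟩

theorem ZMod.natCast_injOn_Iio (N : ℕ) : Set.InjOn (Nat.cast : ℕ → ZMod N) (Set.Iio N) :=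
  fun x hx y hy h => by
    simpa [Nat.mod_eq_of_lt (Set.mem_Iio.1 hx), Nat.mod_eq_of_lt (Set.mem_Iio.1 hy)] using
      (ZMod.natCast_eq_natCast_iff' x y N).1 h

theorem Monotone.val_lt_card_filter_lt_iff {α : Type*} [LinearOrder α] {n : ℕ}
    {p : Fin n → α} (hp : Monotone p) (j : Fin n) (i : α) :
    (j : ℕ) < #{k | p k < i} ↔ p j < i := by
  constructor
  · intro hj
    by_contra! hij
    have hsub : ({k | p k < i} : Finset (Fin n)) ⊆ Iio j := fun k hk => by
      simp only [mem_filter, mem_univ, true_and] at hk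
      exact mem_Iio.2 (lt_of_not_ge fun hjk => (hk.trans_le hij).not_ge (hp hjk))
    have := card_le_card hsub
    rw [Fin.card_Iio] at this
    omega
  · intro hj
    have hsub : Iic j ⊆ ({k | p k < i} : Finset (Fin n)) := fun k hk => by
      simpa using (hp (mem_Iic.1 hk)).trans_lt hj
    have := card_le_card hsub
    rw [Fin.card_Iic] at this
    omega

theorem StrictMono.apply_add_index_le_apply_add_index {n : ℕ} {s : Fin n → ℕ}
    (hs : StrictMono s) {i j : Fin n} (hij : i ≤ j) : s i + j ≤ s j + i := by
  have := card_le_card_of_injOn s (s := Icc i j) (t := Icc (s i) (s j))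
    (fun k hk => by
      rw [coe_Icc, Set.mem_Icc] at hk
      exact mem_Icc.2 ⟨hs.monotone hk.1, hs.monotone hk.2⟩)
    hs.injective.injOn
  rw [Fin.card_Icc, Nat.card_Icc] at this
  have := hs.monotone hij
  have := Fin.le_def.1 hij
  omega

namespace DyckSubset

variable {N : ℕ}

/-- Read `S` as the `N`-periodic lattice path whose `x`-th step is east iff `x mod N ∈ S`; after
`a` steps, `height S a = m * #east - n * #north`, where `n = #S` and `m = N - n`. -/
def height (S : Finset (ZMod N)) (a : ℕ) : ℤ :=
  N * Nat.count (fun x : ℕ => (x : ZMod N) ∈ S) a - #S * a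

def IsDyck (S : Finset (ZMod N)) : Prop := ∀ a, 0 ≤ height S a

variable {S : Finset (ZMod N)}

theorem count_mem_add (k a : ℕ) :
    Nat.count (fun x : ℕ => (x : ZMod N) ∈ S) (k + a) =
      Nat.count (fun x : ℕ => (x : ZMod N) ∈ S) k +
        Nat.count (fun x : ℕ => (x : ZMod N) ∈ -(k : ZMod N) +ᵥ S) a := by
  simp only [Nat.count_add, mem_neg_vadd_finset_iff, vadd_eq_add, Nat.cast_add]

theorem height_neg_vadd (k a : ℕ) :
    height (-(k : ZMod N) +ᵥ S) a = height S (k + a) - height S k := by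
  simp only [height, count_mem_add, card_vadd_finset]
  push_cast
  ring

theorem natCast_eq_of_height_eq (hS : Nat.Coprime #S N) {a b : ℕ}
    (h : height S a = height S b) : (a : ZMod N) = b := by
  have h' := congrArg (Int.cast : ℤ → ZMod N) h
  simp only [height, Int.cast_sub, Int.cast_mul, Int.cast_natCast, ZMod.natCast_self, zero_mul,
    zero_sub, neg_inj] at h'
  exact (ZMod.unitOfCoprime _ hS).isUnit.mul_left_cancel h'

variable [NeZero N]

theorem count_mem_self : Nat.count (fun x : ℕ => (x : ZMod N) ∈ S) N = #S := by
  rw [Nat.count_eq_card_filter_range]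
  refine card_nbij (fun x => (x : ZMod N)) (fun x hx => (mem_filter.1 hx).2) ?_ ?_
  · exact (ZMod.natCast_injOn_Iio N).mono fun x hx => mem_range.1 (mem_filter.1 hx).1
  · intro z hz
    exact ⟨z.val, by simpa [ZMod.val_lt] using hz, ZMod.natCast_zmod_val z⟩

theorem height_periodic : Function.Periodic (height S) N := by
  intro a
  simp only [height, count_mem_add, count_mem_self, card_vadd_finset]
  push_cast
  ring

theorem exists_forall_height_le : ∃ k, ∀ b, height S k ≤ height S b := by
  obtain ⟨k, -, hk⟩ := (range N).exists_min_image (height S) ⟨0, by simp [NeZero.pos N]⟩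
  exact ⟨k, fun b => (height_periodic (S := S)).map_mod_nat b ▸
    hk _ (by simp [Nat.mod_lt, NeZero.pos N])⟩

theorem isDyck_iff_forall_le : IsDyck S ↔ ∀ a ≤ N, 0 ≤ height S a :=
  ⟨fun h a _ => h a,
    fun h a => (height_periodic (S := S)).map_mod_nat a ▸ h _ (Nat.mod_lt a (NeZero.pos N)).le⟩

theorem isDyck_neg_vadd_iff (k : ℕ) :
    IsDyck (-(k : ZMod N) +ᵥ S) ↔ ∀ b, height S k ≤ height S b := by
  simp only [IsDyck, height_neg_vadd, sub_nonneg]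
  refine ⟨fun h b => ?_, fun h a => h _⟩
  have hk : k ≤ k * N := Nat.le_mul_of_pos_right k (NeZero.pos N)
  have hper : height S (b + k * N) = height S b := by
    simpa using (height_periodic (S := S)).nat_mul k b
  simpa only [show k + (b + k * N - k) = b + k * N by omega, hper] using h (b + k * N - k)

theorem existsUnique_isDyck_vadd (hS : Nat.Coprime #S N) : ∃! t : ZMod N, IsDyck (t +ᵥ S) := by
  obtain ⟨k, hk⟩ := exists_forall_height_le (S := S)
  refine ⟨-(k : ZMod N), (isDyck_neg_vadd_iff k).2 hk, fun t ht => ?_⟩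
  obtain ⟨l, rfl⟩ : ∃ l : ℕ, t = -(l : ZMod N) := ⟨(-t).val, by simp⟩
  rw [isDyck_neg_vadd_iff] at ht
  rw [natCast_eq_of_height_eq hS (le_antisymm (ht k) (hk l))]

theorem card_mul_card_isDyck {n : ℕ} (hn : Nat.Coprime n N) :
    N * Nat.card {T : Set.powersetCard (ZMod N) n // IsDyck (T : Finset (ZMod N))} =
      N.choose n := by
  have hD : ∀ T : Set.powersetCard (ZMod N) n, ∃! t : ZMod N,
      t +ᵥ T ∈ {T : Set.powersetCard (ZMod N) n | IsDyck (T : Finset (ZMod N))} := by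
    intro T
    have hT : Nat.Coprime #(T : Finset (ZMod N)) N := by rw [Set.powersetCard.card_eq]; exact hn
    simp only [Set.mem_ofPred_eq, Set.powersetCard.coe_vadd]
    exact existsUnique_isDyck_vadd hT
  have h := AddAction.card_mul_card_eq_of_existsUnique_vadd_mem _ hD
  rwa [Nat.card_zmod, Set.powersetCard.card, Nat.card_zmod] at h

end DyckSubset

open DyckSubset

namespace ParkingWord

variable {m n N : ℕ} {p : Fin n → ℕ}

theorem card_filter_add_val_lt (hp : Monotone p) (i : ℕ) :
    #{j | p j + j < i + #{j | p j < i}} = #{j | p j < i} := by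
  congr 1
  ext j
  simp only [mem_filter, mem_univ, true_and]
  have := hp.val_lt_card_filter_lt_iff j i
  omega

/-- The parking condition at `i` is the inequality on the right at `a = i + #{j | p j < i}`,
just after the `i`-th north step. -/
theorem isParkingWord_iff (hm : 0 < m) (hp : Monotone p) :
    IsParkingWord m n p ↔ ∀ a ≤ m + n, n * a ≤ (m + n) * #{j | p j + j < a} := by
  constructor
  · rintro ⟨hlt, hpark⟩ a ha
    set c := #{j | p j + j < a}
    obtain hcn | hcn : c < n ∨ c = n := ((card_filter_le _ _).trans_eq (card_fin n)).lt_or_eq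
    · have hs : Monotone fun j : Fin n => p j + j := hp.add Fin.val_strictMono.monotone
      have hac : a ≤ p ⟨c, hcn⟩ + c := by
        simpa using (hs.val_lt_card_filter_lt_iff ⟨c, hcn⟩ a).not.1 (lt_irrefl c)
      obtain hac' | hac' := le_or_gt a c
      · nlinarith
      · have hcard : #{j | p j < a - c} ≤ c := by
          simpa using (hp.val_lt_card_filter_lt_iff ⟨c, hcn⟩ (a - c)).not.2 (by simp; omega)
        have := hpark (a - c) (by omega) (by have := hlt ⟨c, hcn⟩; omega)
        have := Nat.mul_le_mul_left m hcard
        zify [hac'.le] at *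
        nlinarith
    · rw [hcn]
      nlinarith
  · intro h
    have hpark : ∀ i, i ≤ m → i * n ≤ m * #{j | p j < i} := fun i hi => by
      have hc : #{j | p j < i} ≤ n := (card_filter_le _ _).trans_eq (card_fin n)
      have := h (i + #{j | p j < i}) (by omega)
      rw [card_filter_add_val_lt hp] at this
      nlinarith
    refine ⟨fun j => ?_, fun i _ hi => hpark i hi⟩
    have hall : #{j | p j < m} = #(univ : Finset (Fin n)) := by
      refine (card_filter_le _ _).antisymm ?_
      rw [card_univ, Fintype.card_fin]
      exact le_of_mul_le_mul_left (by linarith [hpark m le_rfl]) hm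
    exact filter_card_eq hall j (mem_univ j)

/-- The `j`-th east step of the lattice path of `p` comes after `p j` north steps. -/
def eastSteps (N : ℕ) (p : Fin n → ℕ) : Finset (ZMod N) :=
  univ.image fun j => ((p j + j : ℕ) : ZMod N)

theorem strictMono_add_val (hp : Monotone p) : StrictMono fun j : Fin n => p j + j :=
  hp.add_strictMono Fin.val_strictMono

theorem coe_eastSteps :
    (eastSteps N p : Set (ZMod N)) = Nat.cast '' Set.range fun j => p j + j := by
  rw [eastSteps, coe_image, coe_univ, Set.image_univ, ← Set.range_comp]
  rfl

theorem card_eastSteps (hp : Monotone p) (hpN : ∀ j, p j + j < N) : #(eastSteps N p) = n := by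
  rw [eastSteps, card_image_of_injective, card_fin]
  exact fun j k hjk =>
    (strictMono_add_val hp).injective <| ZMod.natCast_injOn_Iio N (hpN j) (hpN k) hjk

theorem count_mem_eastSteps (hp : Monotone p) (hpN : ∀ j, p j + j < N) {a : ℕ} (ha : a ≤ N) :
    Nat.count (fun x : ℕ => (x : ZMod N) ∈ eastSteps N p) a = #{j | p j + j < a} := by
  rw [Nat.count_eq_card_filter_range]
  symm
  refine card_nbij (fun j => p j + j) (fun j hj => ?_) (strictMono_add_val hp).injective.injOn
    (fun x hx => ?_)
  · simp only [mem_coe, mem_filter, mem_univ, true_and] at hj ⊢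
    exact ⟨mem_range.2 hj, mem_image_of_mem _ (mem_univ j)⟩
  · simp only [mem_coe, mem_filter, mem_range, eastSteps, mem_image, mem_univ, true_and] at hx
    obtain ⟨hxa, j, hj⟩ := hx
    have hjx : p j + j = x := ZMod.natCast_injOn_Iio N (hpN j) (hxa.trans_le ha) hj
    exact ⟨j, by simp [hjx, hxa], hjx⟩

theorem isDyck_eastSteps_iff [NeZero N] (hp : Monotone p) (hpN : ∀ j, p j + j < N) :
    IsDyck (eastSteps N p) ↔ ∀ a ≤ N, n * a ≤ N * #{j | p j + j < a} := by
  rw [isDyck_iff_forall_le]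
  refine forall₂_congr fun a ha => ?_
  rw [height, count_mem_eastSteps hp hpN ha, card_eastSteps hp hpN, sub_nonneg]
  norm_cast

theorem eq_of_eastSteps_eq (hp : Monotone p) (hpN : ∀ j, p j + j < N) {q : Fin n → ℕ}
    (hq : Monotone q) (hqN : ∀ j, q j + j < N) (h : eastSteps N p = eastSteps N q) : p = q := by
  have hrange : (Set.range fun j => p j + j) = Set.range fun j => q j + j := by
    refine ((ZMod.natCast_injOn_Iio N).image_eq_image_iff ?_ ?_).1 ?_
    · exact Set.range_subset_iff.2 hpN
    · exact Set.range_subset_iff.2 hqN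
    · rw [← coe_eastSteps, ← coe_eastSteps, h]
  funext j
  simpa using congrFun (((strictMono_add_val hp).range_inj (strictMono_add_val hq)).1 hrange) j

theorem exists_eastSteps_eq [NeZero N] (T : Finset (ZMod N)) (hT : #T = n) :
    ∃ p : Fin n → ℕ, Monotone p ∧ (∀ j, p j + j < N) ∧ eastSteps N p = T := by
  have hA : #(T.image ZMod.val) = n := by
    rw [card_image_of_injective _ (ZMod.val_injective N), hT]
  set e := (T.image ZMod.val).orderEmbOfFin hA
  have hle : ∀ j : Fin n, (j : ℕ) ≤ e j := fun j => by
    have := e.strictMono.apply_add_index_le_apply_add_index (i := ⟨0, j.pos⟩) (Nat.zero_le j)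
    dsimp only at this
    omega
  have hsub : ∀ j, e j - j + j = e j := fun j => Nat.sub_add_cancel (hle j)
  refine ⟨fun j => e j - j, fun j k hjk => ?_, fun j => ?_, ?_⟩
  · have := e.strictMono.apply_add_index_le_apply_add_index hjk
    dsimp only
    omega
  · obtain ⟨t, -, ht⟩ := mem_image.1 ((T.image ZMod.val).orderEmbOfFin_mem hA j)
    rw [hsub, ← ht]
    exact ZMod.val_lt t
  · calc eastSteps N (fun j => e j - j) = (univ.image e).image Nat.cast := by
          simp only [eastSteps, hsub, image_image]
          rfl
      _ = T := by
          rw [image_orderEmbOfFin_univ, image_image]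
          simp [Function.comp_def]

theorem card_parkingWord_eq (hm : 0 < m) :
    Nat.card {p : Fin n → ℕ // IsParkingWord m n p ∧ Monotone p} =
      Nat.card {T : Set.powersetCard (ZMod (m + n)) n // IsDyck (T : Finset (ZMod (m + n)))} := by
  have hbound : ∀ p : Fin n → ℕ, IsParkingWord m n p → ∀ j, p j + j < m + n :=
    fun p hp j => by have := hp.1 j; omega
  have : NeZero (m + n) := ⟨by omega⟩
  refine Nat.card_eq_of_bijective (fun p => ⟨⟨eastSteps (m + n) p.1,
      Set.powersetCard.mem_iff.2 (card_eastSteps p.2.2 (hbound _ p.2.1))⟩, ?_⟩) ⟨?_, ?_⟩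
  · exact (isDyck_eastSteps_iff p.2.2 (hbound _ p.2.1)).2 ((isParkingWord_iff hm p.2.2).1 p.2.1)
  · rintro ⟨p, hp, hpm⟩ ⟨q, hq, hqm⟩ h
    exact Subtype.ext (eq_of_eastSteps_eq hpm (hbound p hp) hqm (hbound q hq)
      (congrArg (fun T => ((T.1 : Set.powersetCard _ n) : Finset (ZMod (m + n)))) h))
  · rintro ⟨T, hT⟩
    obtain ⟨p, hpm, hpN, hpT⟩ := exists_eastSteps_eq _ (Set.powersetCard.card_eq T)
    refine ⟨⟨p, (isParkingWord_iff hm hpm).2 ((isDyck_eastSteps_iff hpm hpN).1 ?_), hpm⟩,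
      Subtype.ext (Subtype.ext hpT)⟩
    rwa [hpT]

end ParkingWord

theorem card_dyck_words_general (m n : ℕ) (hm : 0 < m)
    (hcop : Nat.Coprime m n) :
    (m + n) * Nat.card {p : Fin n → ℕ // IsParkingWord m n p ∧ Monotone p} =
      (m + n).choose n := by
  have : NeZero (m + n) := ⟨by omega⟩
  rw [ParkingWord.card_parkingWord_eq hm]
  exact card_mul_card_isDyck (Nat.coprime_add_self_right.2 hcop.symm)

/-- For `m`, `n` coprime, the number of weakly increasing (m,n)-parking words
(i.e. (m,n)-Dyck words) is the rational Catalan number `(1/(m+n))·C(m+n,n)`. -/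
theorem card_dyck_words (m n : ℕ) (hm : 0 < m) (hn : 0 < n)
    (hcop : Nat.Coprime m n) :
    (m + n) * Nat.card {p : Fin n → ℕ // IsParkingWord m n p ∧ Monotone p} =
      (m + n).choose n :=
  card_dyck_words_general m n hm hcop
end

section
/- Let m and n be coprime and let 𝔟 be an (m,n)-filter. Then the sum of the elements of m(𝔟) equals C(m+1, 2) = m(m+1)/2 if and only if the sum of the elements of n(𝔟) equals C(n+1, 2) = n(n+1)/2. -/
structure MNFilter (m n : ℕ) where
  levels : Set ℤ
  nonempty : levels.Nonempty
  add_m : ∀ x ∈ levels, x + (m : ℤ) ∈ levels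
  add_n : ∀ x ∈ levels, x + (n : ℤ) ∈ levels
  bddBelow : BddBelow levels

def IsClassMin (k : ℕ) (S : Set ℤ) (x : ℤ) : Prop :=
  x ∈ S ∧ ∀ y ∈ S, (k : ℤ) ∣ (y - x) → x ≤ y

/-- Two integers in `[0, k)` that are congruent mod `k` are equal. -/
lemma int_eq_of_dvd_sub {k a b : ℤ} (hk : 0 < k) (ha0 : 0 ≤ a) (ha : a < k)
    (hb0 : 0 ≤ b) (hb : b < k) (h : k ∣ a - b) : a = b := by
  obtain ⟨t, ht⟩ := h
  have ht0 : t = 0 := by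
    rcases lt_trichotomy t 0 with h1 | h1 | h1
    · nlinarith
    · exact h1
    · nlinarith
  rw [ht0, mul_zero] at ht
  omega

/-- An up-closed set contains everything above a member in its class. -/
lemma mem_of_classMin (k : ℕ) (S : Set ℤ)
    (Sclosed : ∀ z ∈ S, z + (k : ℤ) ∈ S)
    {x0 z : ℤ} (hx0 : x0 ∈ S) (hdvd : (k : ℤ) ∣ z - x0) (hle : x0 ≤ z) : z ∈ S := by
  rcases Nat.eq_zero_or_pos k with hk | hk
  · subst hk
    simp at hdvd
    have : z = x0 := by omega
    rwa [this]
  obtain ⟨t, ht⟩ := hdvd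
  have hkz : (0 : ℤ) < k := by exact_mod_cast hk
  have ht0 : 0 ≤ t := by nlinarith
  have key : ∀ s : ℕ, x0 + (k : ℤ) * s ∈ S := by
    intro s
    induction s with
    | zero => simpa using hx0
    | succ u ih =>
        have := Sclosed _ ih
        have heq : x0 + (k : ℤ) * (u + 1 : ℕ) = x0 + (k : ℤ) * u + k := by
          push_cast; ring
        rwa [heq]
  have hz : z = x0 + (k : ℤ) * t.toNat := by
    rw [Int.toNat_of_nonneg ht0]; omega
  rw [hz]; exact key t.toNat

/-- Every integer lies in the class of some `x r`. -/
lemma exists_class (k : ℕ) (hk : 0 < k) (x : Fin k → ℤ)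
    (hx : ∀ r : Fin k, (k : ℤ) ∣ (x r - (r : ℕ))) (z : ℤ) :
    ∃ r : Fin k, (k : ℤ) ∣ z - x r := by
  have hkz : (0 : ℤ) < k := by exact_mod_cast hk
  have h1 : 0 ≤ z % k := Int.emod_nonneg z (by omega)
  have h2 : z % k < k := Int.emod_lt_of_pos z hkz
  set r : Fin k := ⟨(z % k).toNat, by omega⟩ with hrdef
  refine ⟨r, ?_⟩
  have hr : (k : ℤ) ∣ x r - z % k := by
    have hxr := hx r
    have hcast : ((r : ℕ) : ℤ) = z % k := by
      have : (r : ℕ) = (z % k).toNat := by rw [hrdef]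
      rw [this]; omega
    rwa [hcast] at hxr
  have hd : (k : ℤ) ∣ z - z % k := by
    refine ⟨z / k, ?_⟩
    have := Int.mul_ediv_add_emod z k
    linarith
  have := dvd_sub hd hr
  have heq : z - z % k - (x r - z % k) = z - x r := by ring
  rwa [heq] at this

/-- Key identity: the sum of the class minima equals
`k * (#gaps + c) + (0 + 1 + ⋯ + (k-1))`. -/
lemma side_sum (k : ℕ) (hk : 0 < k) (S : Set ℤ)
    (Sclosed : ∀ z ∈ S, z + (k : ℤ) ∈ S)
    (x : Fin k → ℤ)
    (hx : ∀ r : Fin k, IsClassMin k S (x r) ∧ (k : ℤ) ∣ (x r - (r : ℕ)))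
    (c : ℤ) (hc : ∀ z ∈ S, c ≤ z)
    (G : Finset ℤ) (hG : ∀ z : ℤ, z ∈ G ↔ z ∉ S ∧ c ≤ z) :
    (∑ r, x r) = k * ((G.card : ℤ) + c) + ∑ i : Fin k, (i : ℤ) := by
  classical
  have hkz : (0 : ℤ) < k := by exact_mod_cast hk
  have hmod : ∀ z : ℤ, 0 ≤ z % k ∧ z % k < k := fun z =>
    ⟨Int.emod_nonneg z (by omega), Int.emod_lt_of_pos z hkz⟩
  have hclass : ∀ z : ℤ, ∃ r : Fin k, (k : ℤ) ∣ z - x r :=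
    exists_class k hk x (fun r => (hx r).2)
  choose φ hφ using hclass
  have hφ_eq : ∀ (z : ℤ) (r : Fin k), φ z = r ↔ (k : ℤ) ∣ z - x r := by
    intro z r
    constructor
    · rintro rfl; exact hφ z
    · intro h
      have h1 : (k : ℤ) ∣ x (φ z) - x r := by
        have := dvd_sub (hφ z) h
        have heq : z - x (φ z) - (z - x r) = -(x (φ z) - x r) := by ring
        rw [heq] at this
        exact dvd_neg.mp this
      have h2 : (k : ℤ) ∣ ((φ z : ℕ) : ℤ) - ((r : ℕ) : ℤ) := by
        have ha := (hx (φ z)).2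
        have hb := (hx r).2
        have := dvd_sub (dvd_sub h1 ha) (dvd_neg.mpr hb)
        have heq : x (φ z) - x r - (x (φ z) - ((φ z : ℕ) : ℤ)) - -(x r - ((r : ℕ) : ℤ))
            = ((φ z : ℕ) : ℤ) - ((r : ℕ) : ℤ) := by ring
        rwa [heq] at this
      have heq : ((φ z : ℕ) : ℤ) = ((r : ℕ) : ℤ) :=
        int_eq_of_dvd_sub hkz (Int.natCast_nonneg _) (by exact_mod_cast (φ z).isLt)
          (Int.natCast_nonneg _) (by exact_mod_cast r.isLt) h2
      exact Fin.ext (by exact_mod_cast heq)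
  have hcard : G.card = ∑ r : Fin k, (G.filter (fun z => φ z = r)).card :=
    Finset.card_eq_sum_card_fiberwise (fun z _ => Finset.mem_univ (φ z))
  have hfiber : ∀ r : Fin k,
      ((G.filter (fun z => φ z = r)).card : ℤ) = (x r - c) / k := by
    intro r
    have hxrS : x r ∈ S := (hx r).1.1
    have hxrc : c ≤ x r := hc _ hxrS
    set K : ℤ := (x r - c) / k with hK
    have hK0 : 0 ≤ K := Int.ediv_nonneg (by omega) (by omega)
    have hbij : (G.filter (fun z => φ z = r)).card = (Finset.Icc 1 K).card := by
      apply Finset.card_bij' (fun z _ => (x r - z) / k) (fun j _ => x r - j * k)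
      · intro z hz
        simp only [Finset.mem_filter] at hz
        obtain ⟨hzG, hzr⟩ := hz
        rw [hG] at hzG
        obtain ⟨hzS, hcz⟩ := hzG
        have hdvd : (k : ℤ) ∣ z - x r := (hφ_eq z r).mp hzr
        have hdvd' : (k : ℤ) ∣ x r - z := by
          have := dvd_neg.mpr hdvd; rwa [neg_sub] at this
        have hzlt : z < x r := by
          by_contra hcon
          exact hzS (mem_of_classMin k S Sclosed hxrS hdvd (by omega))
        have hge : (k : ℤ) ≤ x r - z := Int.le_of_dvd (by omega) hdvd'
        rw [Finset.mem_Icc]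
        constructor
        · rw [Int.le_ediv_iff_mul_le hkz]; omega
        · exact Int.ediv_le_ediv hkz (by omega)
      · intro j hj
        rw [Finset.mem_Icc] at hj
        obtain ⟨hj1, hjK⟩ := hj
        have hdvd : (k : ℤ) ∣ (x r - j * k) - x r := ⟨-j, by ring⟩
        have hjk : j * k ≤ K * k := mul_le_mul_of_nonneg_right hjK (le_of_lt hkz)
        have hKk : K * k ≤ x r - c := by
          have h := Int.mul_ediv_add_emod (x r - c) k
          have h0 := (hmod (x r - c)).1
          rw [hK]
          linarith
        have hzc : c ≤ x r - j * k := by linarith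
        have hzS : x r - j * k ∉ S := by
          intro hmem
          have := (hx r).1.2 _ hmem hdvd
          nlinarith
        simp only [Finset.mem_filter]
        exact ⟨(hG _).mpr ⟨hzS, hzc⟩, (hφ_eq _ r).mpr hdvd⟩
      · intro z hz
        simp only [Finset.mem_filter] at hz
        have hdvd : (k : ℤ) ∣ x r - z := by
          have := dvd_neg.mpr ((hφ_eq z r).mp hz.2); rwa [neg_sub] at this
        have := Int.ediv_mul_cancel hdvd
        omega
      · intro j hj
        have heq : (x r - (x r - j * k)) = j * k := by ring
        rw [heq, Int.mul_ediv_cancel _ (by omega)]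
    rw [hbij, Int.card_Icc]
    have heq : K + 1 - 1 = K := by ring
    rw [heq, Int.toNat_of_nonneg hK0]
  -- decomposition of each x r
  have hdecomp : ∀ r : Fin k,
      x r = (k : ℤ) * ((x r - c) / k) + ((((r : ℕ) : ℤ) - c) % k) + c := by
    intro r
    have hmodeq : x r ≡ ((r : ℕ) : ℤ) [ZMOD (k : ℤ)] :=
      (Int.modEq_iff_dvd.mpr (hx r).2).symm
    have h1 : (x r - c) % k = ((((r : ℕ) : ℤ)) - c) % k := Int.ModEq.sub_right c hmodeq
    have h2 := Int.mul_ediv_add_emod (x r - c) k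
    linarith [h1, h2]
  -- sum of remainders is 0 + 1 + ⋯ + (k-1)
  have hrem : (∑ r : Fin k, ((((r : ℕ) : ℤ) - c) % k)) = ∑ i : Fin k, (i : ℤ) := by
    have hmem : ∀ r : Fin k, ((((r : ℕ) : ℤ) - c) % k).toNat < k := by
      intro r; have := hmod (((r : ℕ) : ℤ) - c); omega
    set e : Fin k → Fin k := fun r => ⟨((((r : ℕ) : ℤ) - c) % k).toNat, hmem r⟩ with he
    have hval : ∀ r : Fin k, ((e r : ℕ) : ℤ) = (((r : ℕ) : ℤ) - c) % k := by
      intro r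
      have : (e r : ℕ) = ((((r : ℕ) : ℤ) - c) % k).toNat := by rw [he]
      rw [this]
      have := hmod (((r : ℕ) : ℤ) - c)
      omega
    have hinj : Function.Injective e := by
      intro a b hab
      have h1 : ((((a : ℕ) : ℤ) - c) % k) = ((((b : ℕ) : ℤ) - c) % k) := by
        rw [← hval a, ← hval b, hab]
      have h2 : (k : ℤ) ∣ ((b : ℕ) : ℤ) - ((a : ℕ) : ℤ) := by
        have hd := Int.ModEq.dvd (h1 : Int.ModEq (k : ℤ) _ _)
        have heq : ((b : ℕ) : ℤ) - c - (((a : ℕ) : ℤ) - c) = ((b : ℕ) : ℤ) - ((a : ℕ) : ℤ) := by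
          ring
        rwa [heq] at hd
      have : ((b : ℕ) : ℤ) = ((a : ℕ) : ℤ) :=
        int_eq_of_dvd_sub hkz (Int.natCast_nonneg _) (by exact_mod_cast b.isLt)
          (Int.natCast_nonneg _) (by exact_mod_cast a.isLt) h2
      exact (Fin.ext (by exact_mod_cast this)).symm
    have hbij : Function.Bijective e := Finite.injective_iff_bijective.mp hinj
    calc (∑ r : Fin k, ((((r : ℕ) : ℤ) - c) % k)) = ∑ r : Fin k, ((e r : ℕ) : ℤ) := by
          exact Finset.sum_congr rfl (fun r _ => (hval r).symm)
      _ = ∑ i : Fin k, (i : ℤ) :=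
          Fintype.sum_bijective e hbij _ _ (fun r => rfl)
  have hsum : (∑ r, x r)
      = ∑ r : Fin k, ((k : ℤ) * ((x r - c) / k) + ((((r : ℕ) : ℤ) - c) % k) + c) :=
    Finset.sum_congr rfl (fun r _ => hdecomp r)
  rw [hsum]
  rw [Finset.sum_add_distrib, Finset.sum_add_distrib, hrem]
  have h1 : (∑ r : Fin k, (k : ℤ) * ((x r - c) / k)) = (k : ℤ) * (G.card : ℤ) := by
    rw [← Finset.mul_sum]
    congr 1
    have hc1 : ((G.card : ℕ) : ℤ)
        = ∑ r : Fin k, (((G.filter (fun z => φ z = r)).card : ℕ) : ℤ) := by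
      exact_mod_cast hcard
    rw [← Finset.sum_congr rfl (fun r _ => hfiber r), ← hc1]
  have h2 : (∑ _r : Fin k, c) = (k : ℤ) * c := by
    simp [Finset.sum_const, Finset.card_univ, mul_comm]
  rw [h1, h2]
  ring

/-- For an (m,n)-filter `𝔟`, with `x` enumerating the row minima `m(𝔟)` and `y`
enumerating the column minima `n(𝔟)`, the sum of `m(𝔟)` is `m(m+1)/2` iff
the sum of `n(𝔟)` is `n(n+1)/2`. -/
theorem balanced_iff (m n : ℕ) (hm : 0 < m) (hn : 0 < n)
    (hcop : Nat.Coprime m n) (F : MNFilter m n)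
    (x : Fin m → ℤ) (y : Fin n → ℤ)
    (hx : ∀ r : Fin m, IsClassMin m F.levels (x r) ∧ (m : ℤ) ∣ (x r - (r : ℕ)))
    (hy : ∀ r : Fin n, IsClassMin n F.levels (y r) ∧ (n : ℤ) ∣ (y r - (r : ℕ))) :
    (∑ r, x r) = ((m : ℤ) * (m + 1)) / 2 ↔ (∑ r, y r) = ((n : ℤ) * (n + 1)) / 2 := by
  classical
  obtain ⟨c, hc'⟩ := F.bddBelow
  have hc : ∀ z ∈ F.levels, c ≤ z := fun z hz => hc' hz
  haveI : Nonempty (Fin m) := ⟨⟨0, hm⟩⟩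
  set M : ℤ := Finset.univ.sup' Finset.univ_nonempty x with hM
  set G : Finset ℤ := (Finset.Ico c M).filter (fun z => z ∉ F.levels) with hGdef
  have hG : ∀ z : ℤ, z ∈ G ↔ z ∉ F.levels ∧ c ≤ z := by
    intro z
    simp only [hGdef, Finset.mem_filter, Finset.mem_Ico]
    constructor
    · rintro ⟨⟨hzc, _⟩, hns⟩; exact ⟨hns, hzc⟩
    · rintro ⟨hns, hzc⟩
      refine ⟨⟨hzc, ?_⟩, hns⟩
      by_contra hcon
      push_neg at hcon
      obtain ⟨r, hr⟩ := exists_class m hm x (fun r => (hx r).2) z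
      have hxr : x r ≤ M := Finset.le_sup' x (Finset.mem_univ r)
      exact hns (mem_of_classMin m F.levels F.add_m (hx r).1.1 hr (by omega))
  have hX := side_sum m hm F.levels F.add_m x hx c hc G hG
  have hY := side_sum n hn F.levels F.add_n y hy c hc G hG
  have gauss : ∀ k : ℕ, 0 < k → 2 * (∑ i : Fin k, (i : ℤ)) = (k : ℤ) * ((k : ℤ) - 1) := by
    intro k hk
    rw [Fin.sum_univ_eq_sum_range (fun i => ((i : ℕ) : ℤ)) k]
    have hnat := Finset.sum_range_id_mul_two k
    have hcast : (∑ i ∈ Finset.range k, ((i : ℕ) : ℤ)) * 2 = (k : ℤ) * ((k : ℤ) - 1) := by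
      rw [← Nat.cast_sum]
      rw [show (k : ℤ) - 1 = ((k - 1 : ℕ) : ℤ) from by omega]
      exact_mod_cast hnat
    linarith
  have half : ∀ k : ℕ, 0 < k → ∀ Sk : ℤ,
      Sk = (k : ℤ) * ((G.card : ℤ) + c) + (∑ i : Fin k, (i : ℤ)) →
      (Sk = ((k : ℤ) * ((k : ℤ) + 1)) / 2 ↔ (G.card : ℤ) + c = 1) := by
    intro k hk Sk hSk
    have hkz : (0 : ℤ) < k := by exact_mod_cast hk
    obtain ⟨t, ht⟩ := Int.even_mul_succ_self (k : ℤ)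
    have hdiv : ((k : ℤ) * ((k : ℤ) + 1)) / 2 = t := by rw [ht]; omega
    have hg := gauss k hk
    have ht' : t = (∑ i : Fin k, (i : ℤ)) + k := by nlinarith [ht, hg]
    rw [hSk, hdiv, ht']
    constructor
    · intro h
      have hcanc : (k : ℤ) * ((G.card : ℤ) + c) = (k : ℤ) * 1 := by linarith
      exact mul_left_cancel₀ (ne_of_gt hkz) hcanc
    · intro h; rw [h]; ring
  rw [half m hm _ hX, half n hn _ hY]
end

section
/- Each equivalence class of (m,n)-filters under translation by vectors in ℤ × ℤ contains exactly one balanced (m,n)-filter. -/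
/-- A level set is balanced if its row minima sum to `m(m+1)/2` and its column
minima sum to `n(n+1)/2`. -/
def IsBalancedLevels (m n : ℕ) (S : Set ℤ) : Prop :=
  (∃ x : Fin m → ℤ,
    (∀ r : Fin m, IsClassMin m S (x r) ∧ (m : ℤ) ∣ (x r - (r : ℕ))) ∧
    (∑ r, x r) = ((m : ℤ) * (m + 1)) / 2) ∧
  (∃ y : Fin n → ℤ,
    (∀ r : Fin n, IsClassMin n S (y r) ∧ (n : ℤ) ∣ (y r - (r : ℕ))) ∧
    (∑ r, y r) = ((n : ℤ) * (n + 1)) / 2)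

section BalancedAux

open Finset

lemma add_nat_mul_mem (S : Set ℤ) (c : ℤ) (hc : ∀ x ∈ S, x + c ∈ S) :
    ∀ x ∈ S, ∀ j : ℕ, x + c * j ∈ S := by
  intro x hx j
  induction j with
  | zero => simpa using hx
  | succ j ih =>
      have h := hc _ ih
      have e : x + c * (j:ℤ) + c = x + c * ((j:ℕ)+1 : ℕ) := by push_cast; ring
      rwa [e] at h

lemma int_eq_of_dvd_of_lt {k : ℕ} (hk : 0 < k) {a b : ℤ} (h : (k:ℤ) ∣ a - b)
    (ha : 0 ≤ a) (ha' : a < k) (hb : 0 ≤ b) (hb' : b < k) : a = b := by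
  obtain ⟨q, hq⟩ := h
  have hk' : (0:ℤ) < k := by exact_mod_cast hk
  rcases lt_trichotomy q 0 with hq0 | hq0 | hq0
  · have h1 : q ≤ -1 := by omega
    nlinarith
  · subst hq0; omega
  · have h1 : 1 ≤ q := by omega
    nlinarith

def finres (k : ℕ) (hk : 0 < k) (z : ℤ) : Fin k :=
  ⟨(z % (k:ℤ)).toNat, by
    have h1 : 0 ≤ z % (k:ℤ) := Int.emod_nonneg z (by exact_mod_cast hk.ne')
    have h2 : z % (k:ℤ) < k := Int.emod_lt_of_pos z (by exact_mod_cast hk)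
    omega⟩

lemma finres_coe (k : ℕ) (hk : 0 < k) (z : ℤ) : ((finres k hk z : ℕ) : ℤ) = z % (k:ℤ) := by
  have h1 : 0 ≤ z % (k:ℤ) := Int.emod_nonneg z (by have := hk.ne'; exact_mod_cast this)
  simp [finres, Int.toNat_of_nonneg h1]

lemma dvd_sub_finres (k : ℕ) (hk : 0 < k) (z : ℤ) :
    (k:ℤ) ∣ z - ((finres k hk z : ℕ) : ℤ) := by
  rw [finres_coe]
  exact ⟨z / k, by have := Int.mul_ediv_add_emod z (k:ℤ); linarith⟩

lemma finres_eq_iff (k : ℕ) (hk : 0 < k) (z : ℤ) (r : Fin k) :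
    finres k hk z = r ↔ (k:ℤ) ∣ z - ((r : ℕ) : ℤ) := by
  constructor
  · rintro rfl; exact dvd_sub_finres k hk z
  · intro h
    have h2 := dvd_sub_finres k hk z
    have h3 : (k:ℤ) ∣ ((finres k hk z : ℕ):ℤ) - ((r:ℕ):ℤ) := by
      have h4 := h.sub h2
      have e : z - ((r:ℕ):ℤ) - (z - ((finres k hk z : ℕ):ℤ)) = ((finres k hk z : ℕ):ℤ) - ((r:ℕ):ℤ) := by ring
      rwa [e] at h4
    have hlt1 : ((finres k hk z : ℕ):ℤ) < k := by exact_mod_cast (finres k hk z).isLt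
    have hlt2 : ((r:ℕ):ℤ) < k := by exact_mod_cast r.isLt
    have h5 := int_eq_of_dvd_of_lt hk h3 (by positivity) hlt1 (by positivity) hlt2
    exact Fin.ext (by exact_mod_cast h5)

lemma finres_shift_bijective (k : ℕ) (hk : 0 < k) (t : ℤ) :
    Function.Bijective (fun r : Fin k => finres k hk ((r:ℤ) + t)) := by
  rw [← Finite.injective_iff_bijective]
  intro r r' h
  simp only at h
  have h1 : (k:ℤ) ∣ ((r:ℤ) + t) - ((finres k hk ((r:ℤ)+t) : ℕ):ℤ) := dvd_sub_finres k hk _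
  have h2 : (k:ℤ) ∣ ((r':ℤ) + t) - ((finres k hk ((r':ℤ)+t) : ℕ):ℤ) := dvd_sub_finres k hk _
  rw [h] at h1
  have h3 : (k:ℤ) ∣ ((r:ℤ) - (r':ℤ)) := by
    have h4 := h1.sub h2
    have e : ((r:ℤ) + t) - ((finres k hk ((r':ℤ)+t) : ℕ):ℤ) - (((r':ℤ) + t) - ((finres k hk ((r':ℤ)+t) : ℕ):ℤ)) = (r:ℤ) - (r':ℤ) := by ring
    rwa [e] at h4
  have hlt1 : ((r:ℕ):ℤ) < k := by exact_mod_cast r.isLt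
  have hlt2 : ((r':ℕ):ℤ) < k := by exact_mod_cast r'.isLt
  have h6 := int_eq_of_dvd_of_lt hk h3 (by positivity) hlt1 (by positivity) hlt2
  exact Fin.ext (by exact_mod_cast h6)

lemma sum_comp_finres_shift (k : ℕ) (hk : 0 < k) (t : ℤ) (f : Fin k → ℤ) :
    ∑ r : Fin k, f (finres k hk ((r:ℤ) + t)) = ∑ r : Fin k, f r :=
  Fintype.sum_bijective _ (finres_shift_bijective k hk t) _ _ (fun _ => rfl)

lemma twice_sum_fin (k : ℕ) : 2 * ((∑ r : Fin k, ((r:ℕ):ℤ)) + k) = (k:ℤ) * (k + 1) := by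
  induction k with
  | zero => simp
  | succ j ih =>
      rw [Fin.sum_univ_castSucc]
      simp only [Fin.coe_castSucc]
      push_cast
      push_cast at ih
      linarith

lemma half_eq (k : ℕ) : ((k:ℤ) * ((k:ℤ) + 1)) / 2 = (∑ r : Fin k, ((r:ℕ):ℤ)) + k := by
  rw [← twice_sum_fin k, Int.mul_ediv_cancel_left _ (by norm_num)]

lemma mem_of_ge_cls (S : Set ℤ) (k : ℕ) (hk : 0 < k)
    (hkcl : ∀ z ∈ S, z + (k:ℤ) ∈ S) {x z : ℤ} (hx : x ∈ S)
    (hdvd : (k:ℤ) ∣ z - x) (hge : x ≤ z) : z ∈ S := by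
  obtain ⟨q, hq⟩ := hdvd
  have hk' : (0:ℤ) < k := by exact_mod_cast hk
  have hq0 : 0 ≤ q := by nlinarith
  have h := add_nat_mul_mem S (k:ℤ) hkcl x hx q.toNat
  have e : x + (k:ℤ) * (q.toNat : ℤ) = z := by
    rw [Int.toNat_of_nonneg hq0]; linarith
  rwa [e] at h

lemma classMin_unique {k : ℕ} {S : Set ℤ} {x y : ℤ}
    (hx : IsClassMin k S x) (hy : IsClassMin k S y) (h : (k:ℤ) ∣ y - x) : x = y := by
  have h1 := hx.2 y hy.1 h
  have h2 := hy.2 x hx.1 (by rw [show x - y = -(y - x) by ring]; exact dvd_neg.mpr h)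
  exact le_antisymm h1 h2

lemma exists_classMin (S : Set ℤ) (hbdd : BddBelow S)
    (k : ℕ) (hk : 0 < k) (c : ℤ) (hc : ∀ x ∈ S, x + c ∈ S)
    (hcop : IsCoprime (k:ℤ) c) (x₀ : ℤ) (hx₀ : x₀ ∈ S) (r : ℤ) :
    ∃ x, IsClassMin k S x ∧ (k:ℤ) ∣ x - r := by
  classical
  have hkne : ((k:ℤ)) ≠ 0 := by exact_mod_cast hk.ne'
  obtain ⟨aa, bb, hab⟩ := hcop
  set j : ℤ := (bb * (r - x₀)) % (k:ℤ) with hjdef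
  have hj0 : 0 ≤ j := Int.emod_nonneg _ hkne
  have hz : x₀ + c * (j.toNat : ℤ) ∈ S := add_nat_mul_mem S c hc x₀ hx₀ j.toNat
  rw [Int.toNat_of_nonneg hj0] at hz
  have h1 : (k:ℤ) ∣ j - bb * (r - x₀) := by
    refine ⟨-((bb * (r - x₀)) / k), ?_⟩
    have := Int.mul_ediv_add_emod (bb * (r - x₀)) (k:ℤ)
    rw [hjdef]; linarith
  obtain ⟨q, hq⟩ := h1
  have hdvdz : (k:ℤ) ∣ (x₀ + c * j) - r :=
    ⟨c * q - aa * (r - x₀), by linear_combination c * hq + (r - x₀) * hab⟩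
  obtain ⟨lb, hlb, hleast⟩ := Int.exists_least_of_bdd
    (P := fun z => z ∈ S ∧ (k:ℤ) ∣ z - r)
    (by obtain ⟨b, hb⟩ := hbdd; exact ⟨b, fun z hz => hb hz.1⟩)
    ⟨x₀ + c * j, hz, hdvdz⟩
  refine ⟨lb, ⟨hlb.1, ?_⟩, hlb.2⟩
  intro y hy hdy
  refine hleast y ⟨hy, ?_⟩
  obtain ⟨q1, hq1⟩ := hlb.2
  obtain ⟨q2, hq2⟩ := hdy
  exact ⟨q2 + q1, by linarith [hq1, hq2]⟩

lemma isClassMin_image (k : ℕ) (S : Set ℤ) (t x : ℤ) (h : IsClassMin k S x) :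
    IsClassMin k ((fun z => z + t) '' S) (x + t) := by
  obtain ⟨hx, hmin⟩ := h
  refine ⟨⟨x, hx, rfl⟩, ?_⟩
  rintro y ⟨w, hw, rfl⟩ hdvd
  have hd : (k:ℤ) ∣ w - x := by
    have e : w + t - (x + t) = w - x := by ring
    rwa [e] at hdvd
  have := hmin w hw hd
  simpa using this

lemma card_Ico_filter_dvd (k : ℕ) (hk : 0 < k) (a b : ℤ) (hab : a ≤ b) (hdvd : (k:ℤ) ∣ b - a) :
    (k:ℤ) * (((Finset.Ico a b).filter (fun z => (k:ℤ) ∣ z - a)).card : ℤ) = b - a := by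
  classical
  obtain ⟨d, hd⟩ := hdvd
  have hk' : (0:ℤ) < k := by exact_mod_cast hk
  have hd0 : 0 ≤ d := by nlinarith
  have hset : (Finset.Ico a b).filter (fun z => (k:ℤ) ∣ z - a)
      = (Finset.range d.toNat).image (fun j : ℕ => a + (k:ℤ) * j) := by
    ext z
    simp only [Finset.mem_filter, Finset.mem_Ico, Finset.mem_image, Finset.mem_range]
    constructor
    · rintro ⟨⟨h1, h2⟩, q, hq⟩
      have hq0 : 0 ≤ q := by nlinarith
      have hqd : q < d := by nlinarith
      refine ⟨q.toNat, by omega, ?_⟩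
      rw [Int.toNat_of_nonneg hq0]; linarith
    · rintro ⟨j, hj, rfl⟩
      have hj' : (j:ℤ) < d := by
        have : (j:ℤ) < (d.toNat:ℤ) := by exact_mod_cast hj
        omega
      have hj0 : (0:ℤ) ≤ (j:ℤ) := by positivity
      refine ⟨⟨by nlinarith, by nlinarith⟩, j, by ring⟩
  rw [hset, Finset.card_image_of_injective _ ?_, Finset.card_range]
  · rw [Int.toNat_of_nonneg hd0]; linarith
  · intro i j hij
    have h1 : (k:ℤ) * i = k * j := by
      simp only at hij; linarith
    have h2 : (i:ℤ) = j := mul_left_cancel₀ hk'.ne' h1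
    exact_mod_cast h2

open scoped Classical in
lemma sum_classMin (S : Set ℤ) (k : ℕ) (hk : 0 < k)
    (hkcl : ∀ z ∈ S, z + (k:ℤ) ∈ S)
    (L B : ℤ) (hL : ∀ z ∈ S, L ≤ z)
    (x : Fin k → ℤ) (hx : ∀ r, IsClassMin k S (x r) ∧ (k:ℤ) ∣ x r - ((r:ℕ):ℤ))
    (hB : ∀ r, x r < B) :
    ∑ r, x r = (k:ℤ) * L + (∑ r : Fin k, ((r:ℕ):ℤ))
      + (k:ℤ) * (((Finset.Ico L B).filter (fun z => z ∉ S)).card : ℤ) := by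
  have hk' : (0:ℤ) < k := by exact_mod_cast hk
  have hkne : ((k:ℤ)) ≠ 0 := hk'.ne'
  set ℓ : Fin k → ℤ := fun r => L + (((r:ℕ):ℤ) + (-L)) % (k:ℤ) with hldef
  have hmodlt : ∀ a : ℤ, a % (k:ℤ) < k := fun a => Int.emod_lt_of_pos a hk'
  have hmodge : ∀ a : ℤ, 0 ≤ a % (k:ℤ) := fun a => Int.emod_nonneg a hkne
  have hdvd_mod : ∀ a : ℤ, (k:ℤ) ∣ a % (k:ℤ) - a := fun a =>
    ⟨-(a / k), by have := Int.mul_ediv_add_emod a (k:ℤ); linarith⟩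
  have hLl : ∀ r, L ≤ ℓ r := fun r => by
    have := hmodge (((r:ℕ):ℤ) + (-L)); simp only [hldef]; linarith
  have hlL : ∀ r, ℓ r < L + k := fun r => by
    have := hmodlt (((r:ℕ):ℤ) + (-L)); simp only [hldef]; linarith
  have hdvd_lr : ∀ r : Fin k, (k:ℤ) ∣ ℓ r - ((r:ℕ):ℤ) := fun r => by
    have h0 := hdvd_mod (((r:ℕ):ℤ) + (-L))
    have e : ℓ r - ((r:ℕ):ℤ) = (((r:ℕ):ℤ) + (-L)) % (k:ℤ) - (((r:ℕ):ℤ) + (-L)) := by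
      simp only [hldef]; ring
    rw [e]; exact h0
  have hdvd_xl : ∀ r, (k:ℤ) ∣ x r - ℓ r := fun r => by
    have h1 := (hx r).2
    have h2 := hdvd_lr r
    have e : x r - ℓ r = (x r - ((r:ℕ):ℤ)) - (ℓ r - ((r:ℕ):ℤ)) := by ring
    rw [e]; exact h1.sub h2
  have hLx : ∀ r, L ≤ x r := fun r => hL _ (hx r).1.1
  have hlx : ∀ r, ℓ r ≤ x r := fun r => by
    by_contra hcon
    push_neg at hcon
    obtain ⟨q, hq⟩ := hdvd_xl r
    have hq1 : q ≤ -1 := by nlinarith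
    have h2 : x r ≤ ℓ r - k := by nlinarith
    have := hLx r; have := hlL r; linarith
  set G := (Finset.Ico L B).filter (fun z => z ∉ S) with hG
  have hGcard : G.card = ∑ r : Fin k, (G.filter (fun z => finres k hk z = r)).card :=
    Finset.card_eq_sum_card_fiberwise (fun z _ => Finset.mem_univ _)
  have hfiber : ∀ r : Fin k, G.filter (fun z => finres k hk z = r)
      = (Finset.Ico (ℓ r) (x r)).filter (fun z => (k:ℤ) ∣ z - ℓ r) := by
    intro r
    ext z
    simp only [hG, Finset.mem_filter, Finset.mem_Ico, finres_eq_iff k hk]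
    constructor
    · rintro ⟨⟨⟨hz1, hz2⟩, hz3⟩, hz4⟩
      have hdzl : (k:ℤ) ∣ z - ℓ r := by
        have h0 := hz4.sub (hdvd_lr r)
        have e : z - ((r:ℕ):ℤ) - (ℓ r - ((r:ℕ):ℤ)) = z - ℓ r := by ring
        rwa [e] at h0
      have hzx : (k:ℤ) ∣ z - x r := by
        have h0 := hdzl.sub (hdvd_xl r)
        have e : z - ℓ r - (x r - ℓ r) = z - x r := by ring
        rwa [e] at h0
      have hzltx : z < x r := by
        by_contra hcon; push_neg at hcon
        exact hz3 (mem_of_ge_cls S k hk hkcl (hx r).1.1 hzx hcon)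
      have hzgel : ℓ r ≤ z := by
        by_contra hcon; push_neg at hcon
        obtain ⟨q, hq⟩ := hdzl
        have hq1 : q ≤ -1 := by nlinarith
        have := hlL r
        nlinarith
      exact ⟨⟨hzgel, hzltx⟩, hdzl⟩
    · rintro ⟨⟨hz1, hz2⟩, hz3⟩
      have hdd : (k:ℤ) ∣ z - x r := by
        have h0 := hz3.sub (hdvd_xl r)
        have e : z - ℓ r - (x r - ℓ r) = z - x r := by ring
        rwa [e] at h0
      have hzS : z ∉ S := fun hzmem => by
        have := (hx r).1.2 z hzmem hdd
        linarith
      refine ⟨⟨⟨le_trans (hLl r) hz1, lt_trans hz2 (hB r)⟩, hzS⟩, ?_⟩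
      have h0 := hz3.add (hdvd_lr r)
      have e : z - ℓ r + (ℓ r - ((r:ℕ):ℤ)) = z - ((r:ℕ):ℤ) := by ring
      rwa [e] at h0
  have hfibcard : ∀ r : Fin k,
      (k:ℤ) * ((G.filter (fun z => finres k hk z = r)).card : ℤ) = x r - ℓ r := by
    intro r
    rw [hfiber r]
    exact card_Ico_filter_dvd k hk _ _ (hlx r) (hdvd_xl r)
  have hsum1 : (k:ℤ) * (G.card : ℤ) = ∑ r, (x r - ℓ r) := by
    rw [hGcard]
    push_cast
    rw [Finset.mul_sum]
    exact Finset.sum_congr rfl (fun r _ => hfibcard r)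
  have h1 : ∑ r : Fin k, ((((r:ℕ):ℤ) + (-L)) % (k:ℤ)) = ∑ r : Fin k, ((r:ℕ):ℤ) := by
    rw [← sum_comp_finres_shift k hk (-L) (fun s : Fin k => ((s:ℕ):ℤ))]
    exact Finset.sum_congr rfl (fun r _ => (finres_coe k hk _).symm)
  have hsumℓ : ∑ r, ℓ r = (k:ℤ) * L + ∑ r : Fin k, ((r:ℕ):ℤ) := by
    simp only [hldef]
    rw [Finset.sum_add_distrib, h1, Finset.sum_const, Finset.card_univ, Fintype.card_fin]
    push_cast; ring
  have hfin : ∑ r, x r = ∑ r, ℓ r + ∑ r, (x r - ℓ r) := by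
    rw [← Finset.sum_add_distrib]
    exact Finset.sum_congr rfl (fun r _ => by ring)
  rw [hfin, hsumℓ, ← hsum1]

end BalancedAux

open scoped Classical in
/-- Each translation class of (m,n)-filters contains exactly one balanced
(m,n)-filter: translation of the filter by `(u,v) ∈ ℤ × ℤ` shifts its level set
by `m·u + n·v`. -/
theorem unique_balanced_representative (m n : ℕ) (hm : 0 < m) (hn : 0 < n)
    (hcop : Nat.Coprime m n) (F : MNFilter m n) :
    ∃! S : Set ℤ,
      (∃ u v : ℤ, S = (fun z => z + ((m : ℤ) * u + (n : ℤ) * v)) '' F.levels) ∧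
      IsBalancedLevels m n S := by
  set S₀ := F.levels with hS₀def
  have hm' : (0:ℤ) < m := by exact_mod_cast hm
  have hn' : (0:ℤ) < n := by exact_mod_cast hn
  have hcopZ : IsCoprime (m:ℤ) (n:ℤ) := by
    rw [Int.isCoprime_iff_gcd_eq_one]
    exact_mod_cast hcop
  obtain ⟨z₀, hz₀⟩ := F.nonempty
  have hmex : ∀ r : Fin m, ∃ x, IsClassMin m S₀ x ∧ (m:ℤ) ∣ x - ((r:ℕ):ℤ) := fun r =>
    exists_classMin S₀ F.bddBelow m hm (n:ℤ) F.add_n hcopZ z₀ hz₀ _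
  choose x₀ hx₀ using hmex
  have hnex : ∀ r : Fin n, ∃ y, IsClassMin n S₀ y ∧ (n:ℤ) ∣ y - ((r:ℕ):ℤ) := fun r =>
    exists_classMin S₀ F.bddBelow n hn (m:ℤ) F.add_m hcopZ.symm z₀ hz₀ _
  choose y₀ hy₀ using hnex
  obtain ⟨L, hL0⟩ := F.bddBelow
  have hL : ∀ z ∈ S₀, L ≤ z := fun z hz => hL0 hz
  set M : Finset ℤ := insert L ((Finset.univ.image x₀) ∪ (Finset.univ.image y₀)) with hMdef
  set B : ℤ := M.max' (by simp [hMdef]) + 1 with hBdef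
  have hBx : ∀ r, x₀ r < B := fun r => by
    have h := Finset.le_max' M (x₀ r)
      (Finset.mem_insert_of_mem (Finset.mem_union_left _ (Finset.mem_image_of_mem x₀ (Finset.mem_univ r))))
    omega
  have hBy : ∀ r, y₀ r < B := fun r => by
    have h := Finset.le_max' M (y₀ r)
      (Finset.mem_insert_of_mem (Finset.mem_union_right _ (Finset.mem_image_of_mem y₀ (Finset.mem_univ r))))
    omega
  set G := (Finset.Ico L B).filter (fun z => z ∉ S₀) with hGdef
  set g : ℤ := (G.card : ℤ) with hgdef
  have hsm : ∑ r, x₀ r = (m:ℤ) * L + (∑ r : Fin m, ((r:ℕ):ℤ)) + (m:ℤ) * g :=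
    sum_classMin S₀ m hm F.add_m L B hL x₀ hx₀ hBx
  have hsn : ∑ r, y₀ r = (n:ℤ) * L + (∑ r : Fin n, ((r:ℕ):ℤ)) + (n:ℤ) * g :=
    sum_classMin S₀ n hn F.add_n L B hL y₀ hy₀ hBy
  set t : ℤ := 1 - L - g with htdef
  obtain ⟨aa, bb, hab⟩ := hcopZ
  have htt : (m:ℤ) * (aa * t) + (n:ℤ) * (bb * t) = t := by linear_combination t * hab
  refine ⟨(fun z => z + ((m:ℤ) * (aa * t) + (n:ℤ) * (bb * t))) '' S₀,
    ⟨⟨aa * t, bb * t, rfl⟩, ?_, ?_⟩, ?_⟩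
  · -- m-part of balancedness
    refine ⟨fun r => x₀ (finres m hm ((r:ℤ) + (-t))) + t, fun r => ⟨?_, ?_⟩, ?_⟩
    · rw [htt]
      exact isClassMin_image m S₀ t _ (hx₀ _).1
    · set s := finres m hm ((r:ℤ) + (-t)) with hs
      have h1 := (hx₀ s).2
      have h2 := dvd_sub_finres m hm ((r:ℤ) + (-t))
      have e : x₀ s + t - ((r:ℕ):ℤ)
          = (x₀ s - ((s:ℕ):ℤ)) - ((((r:ℕ):ℤ) + (-t)) - ((s:ℕ):ℤ)) := by push_cast; ring
      rw [e]; exact h1.sub h2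
    · have hbij := sum_comp_finres_shift m hm (-t) (fun s => x₀ s + t)
      rw [hbij, half_eq, Finset.sum_add_distrib, Finset.sum_const, Finset.card_univ,
        Fintype.card_fin, hsm]
      push_cast
      rw [htdef]
      ring
  · -- n-part of balancedness
    refine ⟨fun r => y₀ (finres n hn ((r:ℤ) + (-t))) + t, fun r => ⟨?_, ?_⟩, ?_⟩
    · rw [htt]
      exact isClassMin_image n S₀ t _ (hy₀ _).1
    · set s := finres n hn ((r:ℤ) + (-t)) with hs
      have h1 := (hy₀ s).2
      have h2 := dvd_sub_finres n hn ((r:ℤ) + (-t))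
      have e : y₀ s + t - ((r:ℕ):ℤ)
          = (y₀ s - ((s:ℕ):ℤ)) - ((((r:ℕ):ℤ) + (-t)) - ((s:ℕ):ℤ)) := by push_cast; ring
      rw [e]; exact h1.sub h2
    · have hbij := sum_comp_finres_shift n hn (-t) (fun s => y₀ s + t)
      rw [hbij, half_eq, Finset.sum_add_distrib, Finset.sum_const, Finset.card_univ,
        Fintype.card_fin, hsn]
      push_cast
      rw [htdef]
      ring
  · -- uniqueness
    rintro S' ⟨⟨u', v', hS'⟩, ⟨x', hx', hsum'⟩, -⟩
    set t' : ℤ := (m:ℤ) * u' + (n:ℤ) * v' with ht'def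
    have hxeq : ∀ r : Fin m, x' r = x₀ (finres m hm ((r:ℤ) + (-t'))) + t' := by
      intro r
      set s := finres m hm ((r:ℤ) + (-t')) with hs
      have hcm : IsClassMin m S' (x₀ s + t') := by
        rw [hS']; exact isClassMin_image m S₀ t' _ (hx₀ s).1
      refine classMin_unique (hx' r).1 hcm ?_
      have h1 := (hx₀ s).2
      have h2 := dvd_sub_finres m hm ((r:ℤ) + (-t'))
      have h3 := (hx' r).2
      have e : (x₀ s + t') - x' r
          = (x₀ s - ((s:ℕ):ℤ)) - ((((r:ℕ):ℤ) + (-t')) - ((s:ℕ):ℤ)) - (x' r - ((r:ℕ):ℤ)) := by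
        push_cast; ring
      rw [e]; exact (h1.sub h2).sub h3
    have hbij := sum_comp_finres_shift m hm (-t') (fun s => x₀ s + t')
    have hsum2 : ∑ r, x' r = ∑ r, x₀ r + (m:ℤ) * t' := by
      rw [Finset.sum_congr rfl (fun r _ => hxeq r), hbij, Finset.sum_add_distrib,
        Finset.sum_const, Finset.card_univ, Fintype.card_fin]
      push_cast; ring
    have hA : ∑ r, x' r = (∑ r : Fin m, ((r:ℕ):ℤ)) + m := by
      rw [hsum', half_eq]
    have htt' : t' = t := by
      rw [hsum2, hsm] at hA
      have : (m:ℤ) * t' = (m:ℤ) * t := by rw [htdef]; linarith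
      exact mul_left_cancel₀ hm'.ne' this
    rw [hS', htt', htt]
end

section
/- An affine permutation w^{-1} lies in the Sommers region S_m^n if and only if w(i) − w(j) ≠ m for all integers i < j. -/
/-- An affine permutation in `S̃_n`: a bijection `w : ℤ → ℤ` with
`w(i+n) = w(i) + n` and `w(1) + ⋯ + w(n) = n(n+1)/2`. -/
structure AffinePerm (n : ℕ) where
  toEquiv : ℤ ≃ ℤ
  shift : ∀ i : ℤ, toEquiv (i + (n : ℤ)) = toEquiv i + (n : ℤ)
  sum_one_line : (∑ i ∈ Finset.Icc (1 : ℤ) (n : ℤ), toEquiv i) = ((n : ℤ) * (n + 1)) / 2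

/-- The (open) Sommers region `S_m^n ⊆ ℝ^n`: the region containing the
fundamental alcove bounded by the `n` affine hyperplanes
`x_i - x_j = n·k` of height `(j - i) + n·k = m` of the type `Ã_{n-1}` arrangement. -/
def SommersRegion (m n : ℕ) : Set (Fin n → ℝ) :=
  {x | ∀ i j : Fin n, i ≠ j → ∀ k : ℤ,
    (((j : ℕ) : ℤ) - ((i : ℕ) : ℤ) + (n : ℤ) * k = (m : ℤ)) →
      x i - x j < (n : ℝ) * (k : ℝ)}

/-!
Write `u = w⁻¹`. Both sides say that `u q < u (q + m)` for every integer `q`. For the right-hand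
side this is a reformulation: a pair `i < j` with `w i - w j = m` is exactly a `q = w j` with
`u (q + m) < u q`. For the Sommers region, write `q = a + n t` and `q + m = b + n t'` with
`a, b ∈ {1, …, n}`; by periodicity `u q < u (q + m)` becomes `u a - u b < n (t' - t)`, which is
the inequality of the wall `x_{a-1} - x_{b-1} = n (t' - t)` of height `m`. When `a = b` there is
no such wall, but then `n ∣ m` and `u (q + m) = u q + m > u q` anyway.
-/

lemma Int.exists_eq_add_one_add_mul {n : ℕ} (hn : 0 < n) (q : ℤ) :
    ∃ (a : Fin n) (t : ℤ), q = ((a : ℕ) : ℤ) + 1 + n * t := by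
  have h₀ := Int.emod_nonneg (q - 1) (Int.natCast_ne_zero.mpr hn.ne')
  have h₁ := Int.emod_lt_of_pos (q - 1) (Int.natCast_pos.mpr hn)
  refine ⟨⟨((q - 1) % n).toNat, by omega⟩, (q - 1) / n, ?_⟩
  have := Int.mul_ediv_add_emod (q - 1) n
  simp only [Int.toNat_of_nonneg h₀]
  omega

lemma Equiv.forall_lt_sub_ne_iff_lt_symm_add (e : ℤ ≃ ℤ) {m : ℤ} (hm : m ≠ 0) :
    (∀ i j : ℤ, i < j → e i - e j ≠ m) ↔ ∀ q : ℤ, e.symm q < e.symm (q + m) := by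
  constructor
  · intro h q
    refine lt_of_le_of_ne (not_lt.mp fun hlt => h _ _ hlt ?_) fun heq => hm ?_
    · simp
    · simpa using e.symm.injective heq
  · rintro h i j hij hm
    have := h (e j)
    rw [← hm, add_sub_cancel, symm_apply_apply, symm_apply_apply] at this
    exact hij.not_gt this

namespace AffinePerm

variable {n : ℕ} (w : AffinePerm n)

lemma apply_add_mul (i t : ℤ) : w.toEquiv (i + n * t) = w.toEquiv i + n * t := by
  induction t using Int.induction_on with
  | zero => simp
  | succ k ih => rw [mul_add_one, ← add_assoc, w.shift, ih, add_assoc]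
  | pred k ih =>
    have := w.shift (i + n * -k - n)
    rw [sub_add_cancel, ih] at this
    rw [mul_sub_one, ← add_sub_assoc]
    linarith

lemma symm_apply_add_mul (i t : ℤ) : w.toEquiv.symm (i + n * t) = w.toEquiv.symm i + n * t :=
  w.toEquiv.injective (by rw [w.apply_add_mul, Equiv.apply_symm_apply, Equiv.apply_symm_apply])

def symmOneLine : Fin n → ℝ := fun i => ((w.toEquiv.symm ((i : ℕ) + 1) : ℤ) : ℝ)

lemma symmOneLine_mem_sommersRegion_iff {m : ℕ} (hm : 0 < m) (hn : 0 < n) :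
    w.symmOneLine ∈ SommersRegion m n ↔ ∀ q : ℤ, w.toEquiv.symm q < w.toEquiv.symm (q + m) := by
  constructor
  · intro hx q
    obtain ⟨a, t, rfl⟩ := Int.exists_eq_add_one_add_mul hn q
    obtain ⟨b, t', hb⟩ := Int.exists_eq_add_one_add_mul hn (a + 1 + n * t + m)
    rw [hb, w.symm_apply_add_mul, w.symm_apply_add_mul]
    by_cases hab : a = b
    · subst hab
      linarith
    · have hwall := hx a b hab (t' - t) (by linarith)
      simp only [symmOneLine] at hwall
      have hwallℤ : w.toEquiv.symm (a + 1) - w.toEquiv.symm (b + 1) < n * (t' - t) := by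
        exact_mod_cast hwall
      linarith
  · intro h a b _ k hk
    have := h (a + 1)
    rw [show ((a : ℕ) : ℤ) + 1 + m = (b : ℕ) + 1 + n * k by linarith, w.symm_apply_add_mul] at this
    have hwallℤ : w.toEquiv.symm (a + 1) - w.toEquiv.symm (b + 1) < n * k := by linarith
    simp only [symmOneLine]
    exact_mod_cast hwallℤ

end AffinePerm

theorem mem_sommers_iff_general (m n : ℕ) (hm : 0 < m) (hn : 0 < n)
    (w : AffinePerm n) :
    (fun i : Fin n => ((w.toEquiv.symm ((i : ℕ) + 1) : ℤ) : ℝ)) ∈ SommersRegion m n ↔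
    ∀ i j : ℤ, i < j → w.toEquiv i - w.toEquiv j ≠ (m : ℤ) :=
  (w.symmOneLine_mem_sommersRegion_iff hm hn).trans
    (w.toEquiv.forall_lt_sub_ne_iff_lt_symm_add (by exact_mod_cast hm.ne')).symm

/-- The alcove of `w⁻¹` (which contains the one-line notation point
`(w⁻¹(1), ..., w⁻¹(n))`) lies in the Sommers region `S_m^n` iff
`w(i) - w(j) ≠ m` for all integers `i < j`. -/
theorem mem_sommers_iff (m n : ℕ) (hm : 0 < m) (hn : 0 < n)
    (hcop : Nat.Coprime m n) (w : AffinePerm n) :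
    (fun i : Fin n => ((w.toEquiv.symm ((i : ℕ) + 1) : ℤ) : ℝ)) ∈ SommersRegion m n ↔
    ∀ i j : ℤ, i < j → w.toEquiv i - w.toEquiv j ≠ (m : ℤ) :=
  mem_sommers_iff_general m n hm hn w
end

section
/- Let m and n be coprime. The number of affine permutations w ∈ affine S_n such that w^{-1} lies in the Sommers region S_m^n is m^{n−1}. -/
/-!
Inverting `w`, the condition says that `u = w⁻¹` is `m`-stable: `u b < u (b + m)` for all `b`.
As `m` is invertible modulo `n`, the integers `k * m` (`0 ≤ k < n`) form a complete residue
system, so `u` is determined by the sequence `t k = u (k * m)`; `m`-stability says exactly that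
`t` is increasing with `t (n - 1) < t 0 + n * m`, and the normalisation of `u` fixes `∑ t`.
Indexing the values of `t` by their residues modulo `n` and reducing them modulo `n * m`
forgets only which translate of the window `[c, c + n * m)` they were taken in; since sliding
the window changes the sum in steps of `0` or `n * m`, exactly one translate has the right sum.
What remains is a representative `r + n * x r ∈ [0, n * m)` of every residue class `r`, with
digits `x : ZMod n → ZMod m` subject to the single condition `∑ x = (m - 1) * (n - 1) / 2`
(an integer because `m` and `n` are not both even), and there are `m ^ (n - 1)` such `x`.
-/

theorem Int.ModEq.eq_of_abs_lt {a b n : ℤ} (h : a ≡ b [ZMOD n]) (hab : |b - a| < n) : a = b := by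
  have := Int.eq_zero_of_abs_lt_dvd h.dvd hab
  omega

theorem two_mul_sum_Icc_one (n : ℕ) : 2 * ∑ i ∈ Finset.Icc (1 : ℤ) n, i = n * (n + 1) := by
  induction n with
  | zero => simp
  | succ n ih =>
    rw [Nat.cast_succ, ← Finset.insert_Icc_right_eq_Icc_add_one (by omega),
      Finset.sum_insert (by simp), mul_add, ih]
    ring

theorem two_mul_sum_fin_val (n : ℕ) : 2 * ∑ k : Fin n, (k : ℤ) = n * (n - 1) := by
  rw [Fin.sum_univ_eq_sum_range (fun k => (k : ℤ))]
  induction n with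
  | zero => simp
  | succ n ih =>
    rw [Finset.sum_range_succ, mul_add, ih]
    push_cast
    ring

theorem injOn_intCast_Icc_one (n : ℕ) :
    Set.InjOn (fun i : ℤ => (i : ZMod n)) (Finset.Icc (1 : ℤ) n) := by
  intro i hi j hj hij
  simp only [Finset.coe_Icc, Set.mem_Icc] at hi hj
  exact ((ZMod.intCast_eq_intCast_iff _ _ _).1 hij).eq_of_abs_lt
    (abs_sub_lt_iff.2 ⟨by omega, by omega⟩)

theorem Function.Periodic.sum_comp_eq_sum_zmod {M ι : Type*} [AddCommMonoid M] {n : ℕ}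
    [NeZero n] {f : ℤ → M} (hf : Function.Periodic f n) {s : Finset ι} {g : ι → ℤ}
    (hg : Set.InjOn (fun i => (g i : ZMod n)) s) (hs : s.card = n) :
    ∑ i ∈ s, f (g i) = ∑ r : ZMod n, f r.val := by
  refine Finset.sum_nbij (fun i => (g i : ZMod n)) (fun _ _ => Finset.mem_univ _) hg
    (Finset.surjOn_of_injOn_of_card_le _ (fun _ _ => Finset.mem_univ _) hg (by simp [hs])) ?_
  intro i _
  rw [ZMod.val_intCast, Int.emod_def, mul_comm]
  exact (hf.sub_int_mul_eq _).symm

theorem exists_two_mul_eq_pred_mul_pred {m n : ℕ} (hcop : m.Coprime n) :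
    ∃ E : ℤ, 2 * E = (m - 1) * (n - 1) := by
  have hpar : ¬(Even m ∧ Even n) := fun ⟨hm, hn⟩ => by
    have := Nat.dvd_gcd hm.two_dvd hn.two_dvd
    rw [hcop] at this
    omega
  obtain ⟨E, hE⟩ : Even (((m : ℤ) - 1) * (n - 1)) := by
    rw [Int.even_mul, Int.even_sub_one, Int.even_sub_one, Int.even_coe_nat, Int.even_coe_nat]
    tauto
  exact ⟨E, by rw [hE]; ring⟩

theorem Nat.card_subtype_sum_eq {ι G : Type*} [Fintype ι] [DecidableEq ι] [AddCommGroup G]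
    (i₀ : ι) (e : G) :
    Nat.card {x : ι → G // ∑ i, x i = e} = Nat.card G ^ (Fintype.card ι - 1) := by
  let split := Equiv.funSplitAt i₀ G
  have hsum (p : G × ({j // j ≠ i₀} → G)) : ∑ i, split.symm p i = p.1 + ∑ j, p.2 j := by
    rw [Fintype.sum_eq_add_sum_subtype_ne _ i₀]
    simp only [split, Equiv.funSplitAt_symm_apply, dif_pos, ne_eq]
    congr 1
    exact Finset.sum_congr rfl fun j _ => dif_neg j.2
  have hcard : Nat.card {j // j ≠ i₀} = Fintype.card ι - 1 := by
    rw [Nat.card_eq_fintype_card, Fintype.card_subtype_compl, Fintype.card_subtype_eq]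
  rw [← hcard, ← Nat.card_fun]
  exact Nat.card_congr
    { toFun := fun x => (split x).2
      invFun := fun y => ⟨split.symm (e - ∑ j, y j, y), by rw [hsum, sub_add_cancel]⟩
      left_inv := by
        rintro ⟨x, rfl⟩
        have hx := hsum (split x)
        rw [Equiv.symm_apply_apply] at hx
        refine Subtype.ext (split.injective ?_)
        simp only [Equiv.apply_symm_apply, hx, add_sub_cancel_right]
      right_inv := fun y => by simp }

namespace Int

variable {ι : Type*} [Fintype ι] {N : ℤ}

theorem toIcoMod_modEq (hN : 0 < N) (c x : ℤ) : toIcoMod hN c x ≡ x [ZMOD N] :=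
  modEq_iff_dvd.2 ⟨toIcoDiv hN c x, by rw [self_sub_toIcoMod, smul_eq_mul, mul_comm]⟩

theorem toIcoMod_add_one_of_not_modEq (hN : 0 < N) {c x : ℤ} (hx : ¬x ≡ c [ZMOD N]) :
    toIcoMod hN (c + 1) x = toIcoMod hN c x := by
  have h₀ := left_le_toIcoMod hN c x
  have h₁ := toIcoMod_lt_right hN c x
  have h₂ := left_le_toIcoMod hN (c + 1) x
  have h₃ := toIcoMod_lt_right hN (c + 1) x
  have hne : toIcoMod hN c x ≠ c := fun h => hx (h ▸ toIcoMod_modEq hN c x).symm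
  exact ((toIcoMod_modEq hN _ x).trans (toIcoMod_modEq hN c x).symm).eq_of_abs_lt
    (abs_sub_lt_iff.2 ⟨by omega, by omega⟩)

theorem sum_toIcoMod_add_one_le (hN : 0 < N) {ρ : ι → ℤ}
    (hρ : ∀ i j, ρ i ≡ ρ j [ZMOD N] → i = j) (c : ℤ) :
    ∑ i, toIcoMod hN (c + 1) (ρ i) ≤ ∑ i, toIcoMod hN c (ρ i) + N := by
  classical
  set jumps := Finset.univ.filter fun i => ρ i ≡ c [ZMOD N]
  have hle (i : ι) :
      toIcoMod hN (c + 1) (ρ i) ≤ toIcoMod hN c (ρ i) + if i ∈ jumps then N else 0 := by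
    split_ifs with h
    · linarith [left_le_toIcoMod hN c (ρ i), toIcoMod_lt_right hN (c + 1) (ρ i)]
    · rw [toIcoMod_add_one_of_not_modEq hN (by simpa [jumps] using h), add_zero]
  have hcard : (jumps.card : ℤ) ≤ 1 := by
    have : jumps.card ≤ 1 := Finset.card_le_one.2 fun i hi j hj => by
      simp only [jumps, Finset.mem_filter, Finset.mem_univ, true_and] at hi hj
      exact hρ i j (hi.trans hj.symm)
    exact_mod_cast this
  calc ∑ i, toIcoMod hN (c + 1) (ρ i)
      ≤ ∑ i, (toIcoMod hN c (ρ i) + if i ∈ jumps then N else 0) :=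
        Finset.sum_le_sum fun i _ => hle i
    _ = ∑ i, toIcoMod hN c (ρ i) + jumps.card * N := by
        rw [Finset.sum_add_distrib, Finset.sum_ite_mem, Finset.univ_inter, Finset.sum_const,
          nsmul_eq_mul]
    _ ≤ ∑ i, toIcoMod hN c (ρ i) + N := by nlinarith

theorem exists_modEq_of_sub_lt_of_sum_eq [Nonempty ι] (hN : 0 < N) {ρ : ι → ℤ}
    (hρ : ∀ i j, ρ i ≡ ρ j [ZMOD N] → i = j) {S : ℤ} (hS : ∑ i, ρ i ≡ S [ZMOD N]) :
    ∃ T : ι → ℤ, (∀ i, T i ≡ ρ i [ZMOD N]) ∧ (∀ i j, T i - T j < N) ∧ ∑ i, T i = S := by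
  set σ : ℤ → ℤ := fun c => ∑ i, toIcoMod hN c (ρ i)
  have hcard : (1 : ℤ) ≤ Fintype.card ι := by exact_mod_cast Fintype.card_pos
  have hlow (c : ℤ) : Fintype.card ι * c ≤ σ c := by
    simpa using Finset.sum_le_sum fun i (_ : i ∈ Finset.univ) => left_le_toIcoMod hN c (ρ i)
  have hhigh (c : ℤ) : σ c < Fintype.card ι * (c + N) := by
    simpa using Finset.sum_lt_sum_of_nonempty Finset.univ_nonempty
      fun i (_ : i ∈ Finset.univ) => toIcoMod_lt_right hN c (ρ i)
  have hmod (c : ℤ) : σ c ≡ S [ZMOD N] :=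
    (ModEq.sum fun i _ => toIcoMod_modEq hN c (ρ i)).trans hS
  -- `σ` rises by at most `N` at each step, so at the last `c` with `σ c ≤ S` it hits `S`.
  obtain ⟨c, hc, hmax⟩ := exists_greatest_of_bdd (P := fun c => σ c ≤ S)
    ⟨|S|, fun c hc => by nlinarith [hlow c, le_abs_self S, abs_nonneg S]⟩
    ⟨-|S| - N, by nlinarith [hhigh (-|S| - N), neg_abs_le S, abs_nonneg S]⟩
  have hnext : S < σ (c + 1) := not_le.1 fun h => by linarith [hmax _ h]
  refine ⟨fun i => toIcoMod hN c (ρ i), fun i => toIcoMod_modEq hN c (ρ i), fun i j => ?_, ?_⟩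
  · linarith [left_le_toIcoMod hN c (ρ j), toIcoMod_lt_right hN c (ρ i)]
  · exact (hmod c).eq_of_abs_lt
      (abs_sub_lt_iff.2 ⟨by linarith [sum_toIcoMod_add_one_le hN hρ c], by linarith⟩)

theorem eq_of_modEq_of_sub_lt_of_sum_eq {T T' : ι → ℤ} (hmod : ∀ i, T i ≡ T' i [ZMOD N])
    (hT : ∀ i j, T i - T j < N) (hT' : ∀ i j, T' i - T' j < N)
    (hsum : ∑ i, T i = ∑ i, T' i) : T = T' := by
  by_contra hne
  obtain ⟨i₀, hi₀⟩ := Function.ne_iff.1 hne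
  obtain ⟨p, -, hp⟩ := Finset.exists_pos_of_sum_zero_of_exists_nonzero (fun i => T i - T' i)
    (by rw [Finset.sum_sub_distrib, hsum, sub_self]) ⟨i₀, Finset.mem_univ _, sub_ne_zero.2 hi₀⟩
  obtain ⟨q, -, hq⟩ := Finset.exists_pos_of_sum_zero_of_exists_nonzero (fun i => T' i - T i)
    (by rw [Finset.sum_sub_distrib, hsum, sub_self])
    ⟨i₀, Finset.mem_univ _, sub_ne_zero.2 (Ne.symm hi₀)⟩
  have hNp := le_of_dvd hp (hmod p).symm.dvd
  have hNq := le_of_dvd hq (hmod q).dvd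
  linarith [hT p q, hT' q p]

end Int

def IsResidueSystem (n : ℕ) (g : Fin n → ℤ) : Prop :=
  Function.Injective fun k => (g k : ZMod n)

namespace IsResidueSystem

variable {n : ℕ} {g : Fin n → ℤ}

theorem natCast (n : ℕ) : IsResidueSystem n fun k => (k : ℤ) := by
  intro k l (hkl : ((k : ℤ) : ZMod n) = (l : ℤ))
  have hk := k.isLt
  have hl := l.isLt
  have hmod := (ZMod.intCast_eq_intCast_iff _ _ _).1 hkl
  exact Fin.ext (by exact_mod_cast hmod.eq_of_abs_lt (abs_sub_lt_iff.2 ⟨by omega, by omega⟩))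

theorem mul_right {m : ℕ} (hcop : m.Coprime n) : IsResidueSystem n fun k => (k : ℤ) * m := by
  intro k l hkl
  have hunit : IsUnit (m : ZMod n) := (ZMod.isUnit_iff_coprime m n).2 hcop
  apply natCast n
  simpa [hunit.mul_left_inj] using hkl

variable [NeZero n]

theorem bijective (hg : IsResidueSystem n g) : Function.Bijective fun k => (g k : ZMod n) :=
  (Fintype.bijective_iff_injective_and_card _).2 ⟨hg, by simp [ZMod.card]⟩

noncomputable def equiv (hg : IsResidueSystem n g) : Fin n ≃ ZMod n :=
  Equiv.ofBijective _ hg.bijective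

theorem intCast_apply_equiv_symm (hg : IsResidueSystem n g) (r : ZMod n) :
    (g (hg.equiv.symm r) : ZMod n) = r :=
  Equiv.ofBijective_apply_symm_apply _ hg.bijective r

theorem sum_eq_sum_zmod (hg : IsResidueSystem n g) {M : Type*} [AddCommMonoid M]
    {f : ℤ → M} (hf : Function.Periodic f n) : ∑ k, f (g k) = ∑ r : ZMod n, f r.val :=
  hf.sum_comp_eq_sum_zmod hg.injOn (by simp)

theorem bijective_add_mul (hg : IsResidueSystem n g) :
    Function.Bijective fun p : Fin n × ℤ => g p.1 + p.2 * n := by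
  constructor
  · rintro ⟨k, j⟩ ⟨k', j'⟩ h
    simp only at h
    obtain rfl : k = k' := hg <| by simpa using congrArg (fun x : ℤ => (x : ZMod n)) h
    have : j * n = j' * n := by linarith
    simp_all [NeZero.ne]
  · intro x
    obtain ⟨k, hk⟩ := hg.bijective.2 (x : ZMod n)
    obtain ⟨j, hj⟩ := (ZMod.intCast_eq_intCast_iff_dvd_sub _ _ _).1 hk
    exact ⟨(k, j), by simp only; linarith⟩

noncomputable def decompEquiv (hg : IsResidueSystem n g) : Fin n × ℤ ≃ ℤ :=
  Equiv.ofBijective _ hg.bijective_add_mul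

@[simp]
theorem decompEquiv_apply (hg : IsResidueSystem n g) (p : Fin n × ℤ) :
    hg.decompEquiv p = g p.1 + p.2 * n :=
  rfl

@[simp]
theorem decompEquiv_symm_apply_add_mul (hg : IsResidueSystem n g) (k : Fin n) (j : ℤ) :
    hg.decompEquiv.symm (g k + j * n) = (k, j) := by
  rw [Equiv.symm_apply_eq, decompEquiv_apply]

theorem decompEquiv_symm_trans_apply_add {h : Fin n → ℤ} (hg : IsResidueSystem n g)
    (hh : IsResidueSystem n h) (x : ℤ) :
    (hg.decompEquiv.symm.trans hh.decompEquiv) (x + n) =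
      (hg.decompEquiv.symm.trans hh.decompEquiv) x + n := by
  obtain ⟨⟨k, j⟩, rfl⟩ := hg.decompEquiv.surjective x
  rw [decompEquiv_apply, show g k + j * n + n = g k + (j + 1) * n by ring]
  simp only [Equiv.trans_apply, decompEquiv_symm_apply_add_mul, decompEquiv_apply]
  ring

end IsResidueSystem

theorem sum_zmod_val_eq_sum_fin_val (n : ℕ) [NeZero n] :
    ∑ r : ZMod n, (r.val : ℤ) = ∑ k : Fin n, (k : ℤ) :=
  (Fintype.sum_bijective _ (IsResidueSystem.natCast n).bijective _ _ fun k => by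
    simp [ZMod.val_natCast_of_lt k.isLt]).symm

namespace AffinePerm

variable {m n : ℕ}

theorem toEquiv_injective : Function.Injective (toEquiv : AffinePerm n → ℤ ≃ ℤ) := by
  rintro ⟨_, _, _⟩ ⟨_, _, _⟩ rfl
  rfl

theorem periodic_sub (w : AffinePerm n) : Function.Periodic (fun i => w.toEquiv i - i) n := by
  intro i
  simp only [w.shift]
  ring

theorem map_add_mul (w : AffinePerm n) (i c : ℤ) :
    w.toEquiv (i + c * n) = w.toEquiv i + c * n := by
  have : w.toEquiv (i + c * n) - (i + c * n) = w.toEquiv i - i := w.periodic_sub.int_mul c i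
  linarith

theorem modEq_iff (w : AffinePerm n) {i j : ℤ} :
    w.toEquiv i ≡ w.toEquiv j [ZMOD n] ↔ i ≡ j [ZMOD n] := by
  simp only [Int.modEq_iff_dvd]
  constructor
  · rintro ⟨c, hc⟩
    have : w.toEquiv j = w.toEquiv (i + c * n) := by rw [map_add_mul]; linarith
    exact ⟨c, by linarith [w.toEquiv.injective this]⟩
  · rintro ⟨c, hc⟩
    exact ⟨c, by rw [show j = i + c * n by linarith, map_add_mul]; ring⟩

theorem isResidueSystem_comp (w : AffinePerm n) {g : Fin n → ℤ} (hg : IsResidueSystem n g) :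
    IsResidueSystem n fun k => w.toEquiv (g k) := by
  intro k l hkl
  simp only [ZMod.intCast_eq_intCast_iff, w.modEq_iff] at hkl
  exact hg ((ZMod.intCast_eq_intCast_iff _ _ _).2 hkl)

theorem ext_of_isResidueSystem [NeZero n] {g : Fin n → ℤ} (hg : IsResidueSystem n g)
    {w w' : AffinePerm n} (h : ∀ k, w.toEquiv (g k) = w'.toEquiv (g k)) : w = w' := by
  refine toEquiv_injective (Equiv.ext fun x => ?_)
  obtain ⟨⟨k, j⟩, rfl⟩ := hg.bijective_add_mul.2 x
  simp only [map_add_mul, h]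

theorem sum_Icc_eq_iff [NeZero n] {e : ℤ → ℤ} (he : Function.Periodic (fun i => e i - i) n)
    {g : Fin n → ℤ} (hg : IsResidueSystem n g) :
    ∑ i ∈ Finset.Icc (1 : ℤ) n, e i = n * (n + 1) / 2 ↔ ∑ k, (e (g k) - g k) = 0 := by
  have h : ∑ i ∈ Finset.Icc (1 : ℤ) n, e i - ∑ i ∈ Finset.Icc (1 : ℤ) n, i =
      ∑ k, (e (g k) - g k) := by
    rw [← Finset.sum_sub_distrib]
    exact (he.sum_comp_eq_sum_zmod (g := id) (injOn_intCast_Icc_one n) (by simp)).trans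
      (hg.sum_eq_sum_zmod he).symm
  have := two_mul_sum_Icc_one n
  omega

theorem sum_sub_eq_zero [NeZero n] (w : AffinePerm n) {g : Fin n → ℤ}
    (hg : IsResidueSystem n g) : ∑ k, (w.toEquiv (g k) - g k) = 0 :=
  (sum_Icc_eq_iff w.periodic_sub hg).1 w.sum_one_line

theorem symm_apply_add (w : AffinePerm n) (i : ℤ) :
    w.toEquiv.symm (i + n) = w.toEquiv.symm i + n := by
  rw [Equiv.symm_apply_eq, w.shift, Equiv.apply_symm_apply]

def symm (w : AffinePerm n) : AffinePerm n where
  toEquiv := w.toEquiv.symm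
  shift := w.symm_apply_add
  sum_one_line := by
    obtain rfl | hn := n.eq_zero_or_pos
    · simp
    have : NeZero n := .of_pos hn
    have hg := IsResidueSystem.natCast n
    refine (sum_Icc_eq_iff (fun i => ?_) (w.isResidueSystem_comp hg)).2 ?_
    · simp only [w.symm_apply_add]
      ring
    · have h := w.sum_sub_eq_zero hg
      simp only [Equiv.symm_apply_apply, Finset.sum_sub_distrib] at h ⊢
      linarith

theorem symm_symm (w : AffinePerm n) : w.symm.symm = w :=
  toEquiv_injective w.toEquiv.symm_symm

def IsStable (m : ℕ) (u : AffinePerm n) : Prop :=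
  ∀ b : ℤ, u.toEquiv b < u.toEquiv (b + m)

theorem sommers_iff_isStable_symm (hm : 0 < m) (w : AffinePerm n) :
    (∀ i j : ℤ, i < j → w.toEquiv i - w.toEquiv j ≠ m) ↔ w.symm.IsStable m := by
  constructor
  · intro h b
    by_contra! hle
    rcases hle.lt_or_eq with hlt | heq
    · exact h _ _ hlt (by simp [symm])
    · have := w.toEquiv.symm.injective heq
      omega
  · intro h i j hij hdiff
    have := h (w.toEquiv j)
    rw [show w.toEquiv j + m = w.toEquiv i by omega] at this
    simp only [symm, Equiv.symm_apply_apply] at this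
    omega

theorem card_sommers_eq_card_isStable (hm : 0 < m) :
    Nat.card {w : AffinePerm n // ∀ i j : ℤ, i < j → w.toEquiv i - w.toEquiv j ≠ m} =
      Nat.card {u : AffinePerm n // u.IsStable m} :=
  Nat.card_congr ((Function.Involutive.toPerm _ symm_symm).subtypeEquiv
    (sommers_iff_isStable_symm hm))

end AffinePerm

structure IsStableWindow (m n : ℕ) (t : Fin n → ℤ) : Prop where
  strictMono : StrictMono t
  sub_lt : ∀ k l, t k - t l < n * m
  isResidueSystem : IsResidueSystem n t
  sum_eq : ∑ k, t k = ∑ k : Fin n, (k : ℤ) * m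

namespace AffinePerm

variable {m n : ℕ}

def window (m : ℕ) (u : AffinePerm n) : Fin n → ℤ :=
  fun k => u.toEquiv (k * m)

theorem isStableWindow_window [NeZero n] (hcop : m.Coprime n) {u : AffinePerm n}
    (hu : u.IsStable m) : IsStableWindow m n (u.window m) := by
  have hmono : StrictMono fun k : ℤ => u.toEquiv (k * m) :=
    strictMono_int_of_lt_succ fun k => by simpa [add_one_mul] using hu (k * m)
  refine ⟨fun k l hkl => hmono (by exact_mod_cast hkl), fun k l => ?_,
    u.isResidueSystem_comp (.mul_right hcop), ?_⟩
  · have hlt : u.toEquiv (k * m) < u.toEquiv ((l + n) * m) := hmono (by omega)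
    rw [add_mul, mul_comm (n : ℤ), u.map_add_mul] at hlt
    simp only [window]
    linarith
  · have := u.sum_sub_eq_zero (.mul_right hcop)
    rwa [Finset.sum_sub_distrib, sub_eq_zero] at this

noncomputable def ofResidueSystems [NeZero n] {g h : Fin n → ℤ} (hg : IsResidueSystem n g)
    (hh : IsResidueSystem n h) (hsum : ∑ k, h k = ∑ k, g k) : AffinePerm n where
  toEquiv := hg.decompEquiv.symm.trans hh.decompEquiv
  shift := hg.decompEquiv_symm_trans_apply_add hh
  sum_one_line := by
    refine (sum_Icc_eq_iff (fun i => ?_) hg).2 ?_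
    · simp only [hg.decompEquiv_symm_trans_apply_add hh]
      ring
    · have (k : Fin n) : hg.decompEquiv.symm (g k) = (k, 0) := by
        simpa using hg.decompEquiv_symm_apply_add_mul k 0
      simp [this, hsum]

theorem ofResidueSystems_apply_add_mul [NeZero n] {g h : Fin n → ℤ} (hg : IsResidueSystem n g)
    (hh : IsResidueSystem n h) (hsum : ∑ k, h k = ∑ k, g k) (k : Fin n) (j : ℤ) :
    (ofResidueSystems hg hh hsum).toEquiv (g k + j * n) = h k + j * n := by
  simp [ofResidueSystems]

theorem isStable_ofResidueSystems [NeZero n] (hcop : m.Coprime n) {t : Fin n → ℤ}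
    (ht : IsStableWindow m n t) :
    (ofResidueSystems (.mul_right hcop) ht.isResidueSystem ht.sum_eq).IsStable m := by
  intro b
  obtain ⟨⟨k, j⟩, rfl⟩ := (IsResidueSystem.mul_right hcop).decompEquiv.surjective b
  simp only [IsResidueSystem.decompEquiv_apply, ofResidueSystems_apply_add_mul]
  by_cases hk : (k : ℕ) + 1 < n
  · have hb : (k : ℤ) * m + j * n + m = ((⟨k + 1, hk⟩ : Fin n) : ℤ) * m + j * n := by
      push_cast
      ring
    rw [hb, ofResidueSystems_apply_add_mul]
    linarith [ht.strictMono (show k < ⟨k + 1, hk⟩ from Fin.lt_def.2 (Nat.lt_succ_self _))]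
  · have hk' : (k : ℤ) = n - 1 := by omega
    have hb : (k : ℤ) * m + j * n + m = ((0 : Fin n) : ℤ) * m + (j + m) * n := by
      rw [hk', Fin.val_zero]
      push_cast
      ring
    rw [hb, ofResidueSystems_apply_add_mul]
    linarith [ht.sub_lt k 0]

theorem card_isStable_eq_card_isStableWindow [NeZero n] (hcop : m.Coprime n) :
    Nat.card {u : AffinePerm n // u.IsStable m} = Nat.card {t // IsStableWindow m n t} := by
  refine Nat.card_eq_of_bijective (fun u => ⟨u.1.window m, isStableWindow_window hcop u.2⟩)
    ⟨fun u u' h => Subtype.ext ?_, fun t => ⟨⟨_, isStable_ofResidueSystems hcop t.2⟩, ?_⟩⟩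
  · exact ext_of_isResidueSystem (.mul_right hcop) (congrFun (congrArg Subtype.val h))
  · exact Subtype.ext (funext fun k => by
      simpa [window] using ofResidueSystems_apply_add_mul _ t.2.isResidueSystem t.2.sum_eq k 0)

end AffinePerm

structure IsResidueWindow (m n : ℕ) [NeZero n] (T : ZMod n → ℤ) : Prop where
  intCast_apply : ∀ r, (T r : ZMod n) = r
  sub_lt : ∀ r s, T r - T s < n * m
  sum_eq : ∑ r, T r = ∑ k : Fin n, (k : ℤ) * m

structure IsReducedResidueWindow (m n : ℕ) [NeZero n] (ρ : ZMod n → ℤ) : Prop where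
  intCast_apply : ∀ r, (ρ r : ZMod n) = r
  mem_Ico : ∀ r, ρ r ∈ Set.Ico 0 ((n : ℤ) * m)
  sum_modEq : ∑ r, ρ r ≡ ∑ k : Fin n, (k : ℤ) * m [ZMOD n * m]

section ResidueWindows

variable {m n : ℕ} [NeZero n]

theorem IsStableWindow.isResidueWindow {t : Fin n → ℤ} (ht : IsStableWindow m n t) :
    IsResidueWindow m n (t ∘ ht.isResidueSystem.equiv.symm) :=
  ⟨ht.isResidueSystem.intCast_apply_equiv_symm, fun _ _ => ht.sub_lt _ _,
    (Equiv.sum_comp _ t).trans ht.sum_eq⟩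

theorem IsResidueWindow.injective {T : ZMod n → ℤ} (hT : IsResidueWindow m n T) :
    Function.Injective T :=
  fun r s h => by rw [← hT.intCast_apply r, h, hT.intCast_apply]

theorem IsResidueWindow.isStableWindow_orderEmbOfFin {T : ZMod n → ℤ}
    (hT : IsResidueWindow m n T) (hs : (Finset.univ.image T).card = n) :
    IsStableWindow m n ((Finset.univ.image T).orderEmbOfFin hs) := by
  set t := (Finset.univ.image T).orderEmbOfFin hs
  have hmem (k : Fin n) : ∃ r, T r = t k := by
    obtain ⟨r, -, hr⟩ := Finset.mem_image.1 ((Finset.univ.image T).orderEmbOfFin_mem hs k)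
    exact ⟨r, hr⟩
  refine ⟨t.strictMono, fun k l => ?_, fun k l hkl => ?_, ?_⟩
  · obtain ⟨r, hr⟩ := hmem k
    obtain ⟨s, hs⟩ := hmem l
    rw [← hr, ← hs]
    exact hT.sub_lt r s
  · obtain ⟨r, hr⟩ := hmem k
    obtain ⟨s, hs⟩ := hmem l
    simp only [← hr, ← hs, hT.intCast_apply] at hkl
    exact t.injective (by rw [← hr, ← hs, hkl])
  · have ht := Finset.sum_image (f := fun x : ℤ => x) (s := Finset.univ)
      fun k _ l _ h => t.injective h
    have hT' := Finset.sum_image (f := fun x : ℤ => x) (s := Finset.univ)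
      fun r _ s _ h => hT.injective h
    rw [Finset.image_orderEmbOfFin_univ] at ht
    rw [← hT.sum_eq, ← ht, hT']

theorem card_isStableWindow_eq_card_isResidueWindow :
    Nat.card {t // IsStableWindow m n t} = Nat.card {T // IsResidueWindow m n T} := by
  refine Nat.card_eq_of_bijective (fun t => ⟨_, t.2.isResidueWindow⟩) ⟨?_, ?_⟩
  · rintro ⟨t, ht⟩ ⟨t', ht'⟩ h
    have hrange := congrArg Set.range (congrArg Subtype.val h)
    simp only [Set.range_comp, EquivLike.range_eq_univ, Set.image_univ] at hrange
    exact Subtype.ext ((ht.strictMono.range_inj ht'.strictMono).1 hrange)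
  · rintro ⟨T, hT⟩
    have hs : (Finset.univ.image T).card = n := by
      rw [Finset.card_image_of_injective _ hT.injective, Finset.card_univ, ZMod.card]
    have ht := hT.isStableWindow_orderEmbOfFin hs
    refine ⟨⟨_, ht⟩, Subtype.ext (funext fun r => ?_)⟩
    obtain ⟨s, -, hsr⟩ := Finset.mem_image.1
      ((Finset.univ.image T).orderEmbOfFin_mem hs (ht.isResidueSystem.equiv.symm r))
    have hres := ht.isResidueSystem.intCast_apply_equiv_symm r
    rw [← hsr, hT.intCast_apply] at hres
    simp only [Function.comp_apply, ← hsr, hres]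

theorem IsResidueWindow.isReducedResidueWindow_emod [NeZero m] {T : ZMod n → ℤ}
    (hT : IsResidueWindow m n T) : IsReducedResidueWindow m n fun r => T r % (n * m) := by
  have hN : (0 : ℤ) < n * m := by have := NeZero.pos n; have := NeZero.pos m; positivity
  refine ⟨fun r => ?_, fun r => ⟨Int.emod_nonneg _ hN.ne', Int.emod_lt_of_pos _ hN⟩, ?_⟩
  · exact ((ZMod.intCast_eq_intCast_iff _ _ _).2 ((Int.mod_modEq _ _).of_mul_right _)).trans
      (hT.intCast_apply r)
  · rw [← hT.sum_eq]
    exact Int.ModEq.sum fun r _ => Int.mod_modEq _ _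

theorem card_isResidueWindow_eq_card_isReducedResidueWindow [NeZero m] :
    Nat.card {T // IsResidueWindow m n T} = Nat.card {ρ // IsReducedResidueWindow m n ρ} := by
  have hN : (0 : ℤ) < n * m := by have := NeZero.pos n; have := NeZero.pos m; positivity
  refine Nat.card_eq_of_bijective (fun T => ⟨_, T.2.isReducedResidueWindow_emod⟩) ⟨?_, ?_⟩
  · rintro ⟨T, hT⟩ ⟨T', hT'⟩ h
    exact Subtype.ext (Int.eq_of_modEq_of_sub_lt_of_sum_eq
      (fun r => congrFun (congrArg Subtype.val h) r) hT.sub_lt hT'.sub_lt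
      (hT.sum_eq.trans hT'.sum_eq.symm))
  · rintro ⟨ρ, hρ⟩
    have hinc (r s : ZMod n) (h : ρ r ≡ ρ s [ZMOD n * m]) : r = s := by
      rw [← hρ.intCast_apply r, ← hρ.intCast_apply s, ZMod.intCast_eq_intCast_iff]
      exact h.of_mul_right _
    obtain ⟨T, hTρ, hTsub, hTsum⟩ := Int.exists_modEq_of_sub_lt_of_sum_eq hN hinc hρ.sum_modEq
    have hT : IsResidueWindow m n T := ⟨fun r =>
      ((ZMod.intCast_eq_intCast_iff _ _ _).2 ((hTρ r).of_mul_right _)).trans (hρ.intCast_apply r),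
      hTsub, hTsum⟩
    exact ⟨⟨T, hT⟩, Subtype.ext (funext fun r =>
      Eq.trans (hTρ r) (Int.emod_eq_of_lt (hρ.mem_Ico r).1 (hρ.mem_Ico r).2))⟩

theorem sum_modEq_iff_sum_intCast_eq {E : ℤ} (hE : 2 * E = (m - 1) * (n - 1))
    (y : ZMod n → ℤ) :
    ∑ r, ((r.val : ℤ) + n * y r) ≡ ∑ k : Fin n, (k : ℤ) * m [ZMOD n * m] ↔
      ∑ r, (y r : ZMod m) = E := by
  have hG := two_mul_sum_fin_val n
  have key : ∑ k : Fin n, (k : ℤ) * m - ∑ r, ((r.val : ℤ) + n * y r) = n * (E - ∑ r, y r) := by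
    rw [Finset.sum_add_distrib, ← Finset.mul_sum, ← Finset.sum_mul, sum_zmod_val_eq_sum_fin_val]
    have h2 : 2 * ((∑ k : Fin n, (k : ℤ)) * (m - 1) - n * E) = 0 := by
      linear_combination (m - 1 : ℤ) * hG - n * hE
    linear_combination (mul_eq_zero.1 h2).resolve_left two_ne_zero
  rw [Int.modEq_iff_dvd, key, mul_dvd_mul_iff_left (by exact_mod_cast NeZero.ne n),
    ← ZMod.intCast_zmod_eq_zero_iff_dvd, Int.cast_sub, sub_eq_zero, Int.cast_sum, eq_comm]

theorem IsReducedResidueWindow.eq_val_add_mul {ρ : ZMod n → ℤ}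
    (hρ : IsReducedResidueWindow m n ρ) (r : ZMod n) : ρ r = r.val + n * (ρ r / n) := by
  have hval := ZMod.val_intCast (n := n) (ρ r)
  rw [hρ.intCast_apply] at hval
  rw [hval, Int.emod_add_mul_ediv]

theorem IsReducedResidueWindow.ediv_mem_Ico {ρ : ZMod n → ℤ}
    (hρ : IsReducedResidueWindow m n ρ) (r : ZMod n) : ρ r / n ∈ Set.Ico 0 (m : ℤ) := by
  have hn : (0 : ℤ) < n := by exact_mod_cast NeZero.pos n
  exact ⟨Int.ediv_nonneg (hρ.mem_Ico r).1 hn.le,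
    Int.ediv_lt_of_lt_mul hn (by linarith [(hρ.mem_Ico r).2])⟩

theorem isReducedResidueWindow_val_add_mul [NeZero m] {E : ℤ}
    (hE : 2 * E = (m - 1) * (n - 1)) {x : ZMod n → ZMod m} (hx : ∑ r, x r = E) :
    IsReducedResidueWindow m n fun r => r.val + n * (x r).val := by
  refine ⟨fun r => by simp, fun r => ⟨by positivity, ?_⟩,
    (sum_modEq_iff_sum_intCast_eq hE _).2 (by simpa using hx)⟩
  have hr : (r.val : ℤ) < n := by exact_mod_cast r.val_lt
  have hxr : ((x r).val : ℤ) + 1 ≤ m := by exact_mod_cast (x r).val_lt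
  nlinarith

theorem card_isReducedResidueWindow [NeZero m] {E : ℤ} (hE : 2 * E = (m - 1) * (n - 1)) :
    Nat.card {ρ // IsReducedResidueWindow m n ρ} =
      Nat.card {x : ZMod n → ZMod m // ∑ r, x r = E} := by
  have hn : (n : ℤ) ≠ 0 := by exact_mod_cast NeZero.ne n
  refine Nat.card_congr
    { toFun := fun ρ => ⟨fun r => ((ρ.1 r / n : ℤ) : ZMod m), ?_⟩
      invFun := fun x => ⟨_, isReducedResidueWindow_val_add_mul hE x.2⟩
      left_inv := fun ρ => Subtype.ext (funext fun r => ?_)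
      right_inv := fun x => Subtype.ext (funext fun r => ?_) }
  · rw [← sum_modEq_iff_sum_intCast_eq hE]
    simpa only [← ρ.2.eq_val_add_mul] using ρ.2.sum_modEq
  · have h := ρ.2.ediv_mem_Ico r
    simp only [ZMod.val_intCast, Int.emod_eq_of_lt h.1 h.2]
    exact (ρ.2.eq_val_add_mul r).symm
  · dsimp only
    rw [Int.add_mul_ediv_left _ _ hn, Int.ediv_eq_zero_of_lt (Int.natCast_nonneg _)
      (by exact_mod_cast r.val_lt), zero_add, Int.cast_natCast, ZMod.natCast_zmod_val]

end ResidueWindows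

/-- For `m`, `n` coprime, the number of affine permutations `w` whose inverse
lies in the Sommers region `S_m^n` (equivalently, `w(i) - w(j) ≠ m` for all
`i < j`) is `m^(n-1)`. -/
theorem card_sommers_region (m n : ℕ) (hm : 0 < m) (hn : 0 < n)
    (hcop : Nat.Coprime m n) :
    Nat.card {w : AffinePerm n //
      ∀ i j : ℤ, i < j → w.toEquiv i - w.toEquiv j ≠ (m : ℤ)} = m ^ (n - 1) := by
  have : NeZero m := ⟨hm.ne'⟩
  have : NeZero n := ⟨hn.ne'⟩
  obtain ⟨E, hE⟩ := exists_two_mul_eq_pred_mul_pred hcop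
  rw [AffinePerm.card_sommers_eq_card_isStable hm,
    AffinePerm.card_isStable_eq_card_isStableWindow hcop,
    card_isStableWindow_eq_card_isResidueWindow,
    card_isResidueWindow_eq_card_isReducedResidueWindow, card_isReducedResidueWindow hE,
    Nat.card_subtype_sum_eq 0, Nat.card_zmod, ZMod.card]
end

section
/- Let m, n be coprime and let a be an integer with a·n ≡ −1 (mod m). The map sending a word [p_1, ..., p_n] of distinct integers (the column-removal levels of a parking (m,n)-filter tuple, shifted so the minimum is 0) to [a·p_1 mod m, ..., a·p_n mod m] produces an (m,n)-parking word; in particular, for a weakly increasing (m,n)-Dyck filter with column-minima levels n(𝔡) = [q_0, ..., q_{n-1}] (one per residue class mod n, minimum 0), the word [a·q_0 mod m, ..., a·q_{n-1} mod m], when sorted, is the (m,n)-Dyck word recording the column lengths of the associated Dyck path. -/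
namespace IsParkingWord

variable {m n : ℕ} {p : Fin n → ℕ}

theorem comp_perm (h : IsParkingWord m n p) (σ : Equiv.Perm (Fin n)) :
    IsParkingWord m n (p ∘ σ) := by
  refine ⟨fun j => h.1 (σ j), fun i hi him => ?_⟩
  have hcard : (Finset.univ.filter fun j => p (σ j) < i).card =
      (Finset.univ.filter fun j => p j < i).card := Finset.card_equiv σ (by simp)
  simpa only [Function.comp_apply, hcard] using h.2 i hi him

theorem of_injOn (hlt : ∀ j, p j < m) {J : ℕ → Fin n} (hJ : Set.InjOn J (Set.Iio n))
    (hle : ∀ t < n, p (J t) * n ≤ t * m) : IsParkingWord m n p := by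
  refine ⟨hlt, fun i hi him => ?_⟩
  have hm : 0 < m := by omega
  set c := i * n ⌈/⌉ m
  have hc : ∀ t < c, t * m < i * n := fun t ht => by
    have := mt (ceilDiv_le_iff_le_smul hm).2 (not_le.2 ht)
    rw [smul_eq_mul] at this
    lia
  have hcn : c ≤ n :=
    (ceilDiv_le_iff_le_smul hm).2 (by simpa [mul_comm] using Nat.mul_le_mul_right n him)
  -- the `⌈i·n/m⌉` letters `p (J t)` with `t·m < i·n` are all below `i`
  have hmaps : Set.MapsTo J (Finset.range c) (Finset.univ.filter fun j => p j < i) := by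
    intro t ht
    simp only [Finset.coe_range, Set.mem_Iio, Finset.coe_filter, Finset.mem_univ, true_and,
      Set.mem_ofPred_eq] at ht ⊢
    exact Nat.lt_of_mul_lt_mul_right ((hle t (by omega)).trans_lt (hc t ht))
  calc i * n ≤ m * c := le_smul_ceilDiv hm
    _ = m * (Finset.range c).card := by rw [Finset.card_range]
    _ ≤ _ := Nat.mul_le_mul_left m (Finset.card_le_card_of_injOn J hmaps
        (hJ.mono (by simpa using Set.Iio_subset_Iio hcn)))

end IsParkingWord

theorem exists_add_mul_eq_mul_of_closed {ι : Type*} {D : ι → ℤ} {m n : ℤ}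
    (hzero : ∃ i, D i = 0) (hclosed : ∀ i, ∃ j, ∃ k : ℕ, D i + m = D j + k * n) (t : ℕ) :
    ∃ j, ∃ K : ℕ, D j + K * n = t * m := by
  induction t with
  | zero =>
    obtain ⟨j, hj⟩ := hzero
    exact ⟨j, 0, by simp [hj]⟩
  | succ t ih =>
    obtain ⟨j, K, hK⟩ := ih
    obtain ⟨j', k, hk⟩ := hclosed j
    exact ⟨j', K + k, by push_cast; linarith⟩

theorem Int.emod_eq_of_add_mul_eq {a d m n t K : ℤ} (ha : m ∣ a * n + 1) (h : d + K * n = t * m)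
    (hK0 : 0 ≤ K) (hK : K < m) : a * d % m = K := by
  have hmod : a * d ≡ K [ZMOD m] := by
    obtain ⟨b, hb⟩ := ha
    refine Int.modEq_iff_dvd.2 ⟨K * b - a * t, ?_⟩
    linear_combination (-a) * h + K * hb
  rw [hmod, Int.emod_eq_of_lt hK0 hK]

theorem Set.injOn_Iio_of_modEq {ι : Type*} {m n : ℕ} (hcop : m.Coprime n) {D : ι → ℤ}
    {J : ℕ → ι} (hJ : ∀ t : ℕ, D (J t) ≡ t * m [ZMOD n]) : Set.InjOn J (Set.Iio n) := by
  intro t ht s hs hts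
  have h : t * m ≡ s * m [MOD n] := by
    rw [← Int.natCast_modEq_iff]
    push_cast
    exact (hJ t).symm.trans (hts ▸ hJ s)
  exact (Nat.ModEq.cancel_right_of_coprime hcop.symm h).eq_of_lt_of_lt ht hs

theorem anderson_map_is_parking_word_general (m n : ℕ) (hm : 0 < m)
    (hcop : Nat.Coprime m n) (a : ℤ) (ha : (m : ℤ) ∣ a * (n : ℤ) + 1)
    (D : Fin n → ℤ)
    (hpos : ∀ i, 0 ≤ D i) (hzero : ∃ i, D i = 0)
    (hclosed : ∀ i, ∃ j : Fin n, ∃ k : ℕ, D i + (m : ℤ) = D j + (k : ℤ) * (n : ℤ)) :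
    IsParkingWord m n (fun i => ((a * D i) % (m : ℤ)).toNat) ∧
    IsParkingWord m n ((fun i => ((a * D i) % (m : ℤ)).toNat) ∘
      Tuple.sort (fun i => ((a * D i) % (m : ℤ)).toNat)) ∧
    Monotone ((fun i => ((a * D i) % (m : ℤ)).toNat) ∘
      Tuple.sort (fun i => ((a * D i) % (m : ℤ)).toNat)) := by
  choose J K hJK using exists_add_mul_eq_mul_of_closed hzero hclosed
  have hKn (t : ℕ) : K t * n ≤ t * m := by
    zify
    linarith [hpos (J t), hJK t]
  have hJ (t : ℕ) (ht : t < n) : ((a * D (J t)) % (m : ℤ)).toNat = K t := by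
    have hKm : K t < m := Nat.lt_of_mul_lt_mul_right <|
      (hKn t).trans_lt (Nat.mul_lt_mul_of_pos_right ht hm |>.trans_eq (mul_comm n m))
    rw [Int.emod_eq_of_add_mul_eq ha (hJK t) (by positivity) (by exact_mod_cast hKm),
      Int.toNat_natCast]
  have hparking : IsParkingWord m n (fun i => ((a * D i) % (m : ℤ)).toNat) := by
    refine IsParkingWord.of_injOn (fun j => ?_) (Set.injOn_Iio_of_modEq hcop
      fun t => Int.modEq_iff_dvd.2 ⟨K t, by linarith [hJK t]⟩) fun t ht => ?_
    · have := Int.emod_lt_of_pos (a * D j) (by exact_mod_cast hm : (0 : ℤ) < m)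
      omega
    · rw [hJ t ht]
      exact hKn t
  exact ⟨hparking, hparking.comp_perm _, Tuple.monotone_sort _⟩

/-- Let `D` list the column-minimal levels of a Dyck (m,n)-filter: `n` nonnegative
integers, one from each residue class mod `n`, with minimum `0`, whose generated
level set is closed under adding `m`.  With `a·n ≡ -1 (mod m)`, the word
`i ↦ a·D i mod m` is an (m,n)-parking word, and its weakly increasing
rearrangement is an (m,n)-Dyck word (the Dyck word of the associated Dyck path). -/
theorem anderson_map_is_parking_word (m n : ℕ) (hm : 0 < m) (hn : 0 < n)
    (hcop : Nat.Coprime m n) (a : ℤ) (ha : (m : ℤ) ∣ a * (n : ℤ) + 1)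
    (D : Fin n → ℤ)
    (hpos : ∀ i, 0 ≤ D i) (hzero : ∃ i, D i = 0)
    (hres : ∀ i j : Fin n, (n : ℤ) ∣ (D i - D j) → i = j)
    (hclosed : ∀ i, ∃ j : Fin n, ∃ k : ℕ, D i + (m : ℤ) = D j + (k : ℤ) * (n : ℤ)) :
    IsParkingWord m n (fun i => ((a * D i) % (m : ℤ)).toNat) ∧
    IsParkingWord m n ((fun i => ((a * D i) % (m : ℤ)).toNat) ∘
      Tuple.sort (fun i => ((a * D i) % (m : ℤ)).toNat)) ∧
    Monotone ((fun i => ((a * D i) % (m : ℤ)).toNat) ∘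
      Tuple.sort (fun i => ((a * D i) % (m : ℤ)).toNat)) :=
  anderson_map_is_parking_word_general m n hm hcop a ha D hpos hzero hclosed
end

section
/- Let m, n be coprime. The area and dinv statistics are equidistributed on (m,n)-parking words: Σ_{p ∈ PW_m^n} q^{area(p)} = Σ_{p ∈ PW_m^n} q^{dinv(p)} as polynomials in q, where area(p) = (m−1)(n−1)/2 − Σ_i A(𝔭)_i and dinv(p) = (m−1)(n−1)/2 − Σ_i B(𝔭)_i, with A and B the two bijections from parking (m,n)-filter tuples to parking words. Equivalently, the statistic p ↦ Σ_{i} p_i has the same distribution on PW_m^n as the statistic p ↦ Σ_i ζ(p)_i, where ζ = B ∘ A^{-1} is a bijection of PW_m^n to itself. -/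
/-- A parking (m,n)-filter tuple (see the paper): the sorted `m`-tuples
`r i = m(𝔭^{(i)})` of row-minimal levels, together with the removed levels. -/
structure ParkingTuple (m n : ℕ) where
  r : Fin (n + 1) → Fin m → ℤ
  removed : Fin n → ℤ
  mono : ∀ i, Monotone (r i)
  res : ∀ i, ∀ j k : Fin m, (m : ℤ) ∣ (r i j - r i k) → j = k
  nonneg : ∀ j, 0 ≤ r 0 j
  zero_min : ∃ j, r 0 j = 0
  closed : ∀ j, ∃ j' : Fin m, ∃ k : ℕ, r 0 j + (n : ℤ) = r 0 j' + (k : ℤ) * (m : ℤ)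
  mem : ∀ i : Fin n, removed i ∈ Multiset.map (r i.castSucc) Finset.univ.val
  step : ∀ i : Fin n,
    Multiset.map (r i.succ) Finset.univ.val =
      (removed i + (m : ℤ)) ::ₘ
        (Multiset.map (r i.castSucc) Finset.univ.val).erase (removed i)
  last : ∀ j, r (Fin.last n) j = r 0 j + (n : ℤ)

/-- The map `A` (area word): `A(𝔭)_i = a · p_i mod m` where `a·n ≡ -1 (mod m)`. -/
def Aword {m n : ℕ} (a : ℤ) (t : ParkingTuple m n) (i : Fin n) : ℕ :=
  ((a * t.removed i) % (m : ℤ)).toNat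

/-- The map `B` (dinv word): at step `i` record the rank of the removed level
within the current sorted tuple of row minima. -/
def Brank {m n : ℕ} (t : ParkingTuple m n) (i : Fin n) : ℕ :=
  (Finset.univ.filter (fun j : Fin m => t.r i.castSucc j < t.removed i)).card

open Finset

theorem Fin.sum_univ_succ_sub_castSucc {M : Type*} [AddCommGroup M] {n : ℕ}
    (f : Fin (n + 1) → M) : ∑ i : Fin n, (f i.succ - f i.castSucc) = f (Fin.last n) - f 0 := by
  induction n with
  | zero => simp
  | succ n ih =>
    rw [Fin.sum_univ_castSucc]
    simp only [Fin.succ_castSucc]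
    have := ih (fun i => f i.castSucc)
    simp only [Fin.castSucc_zero] at this
    rw [this, Fin.succ_last]
    abel

theorem Finset.card_filter_le_and {ι : Type*} [Fintype ι] [LinearOrder ι] (P : ι → Prop)
    [DecidablePred P] (i : ι) :
    #{j | j ≤ i ∧ P j} = #{j | j < i ∧ P j} + if P i then 1 else 0 := by
  simp_rw [le_iff_lt_or_eq, or_and_right, Finset.filter_or]
  rw [Finset.card_union_of_disjoint (Finset.disjoint_filter.2 fun _ _ h h' => h.1.ne h'.1)]
  simp [Finset.card_filter, ite_and]

theorem Multiset.map_update_univ {α β : Type*} [Fintype α] [DecidableEq α] [DecidableEq β]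
    {f : α → β} (hf : Function.Injective f) (j : α) (b : β) :
    Multiset.map (Function.update f j b) univ.val =
      b ::ₘ (Multiset.map f univ.val).erase (f j) := by
  rw [← Multiset.map_erase f hf, ← Multiset.cons_erase (Finset.mem_univ_val j),
    Multiset.map_cons, Function.update_self, Multiset.erase_cons_head]
  congr 1
  refine Multiset.map_congr rfl fun x hx => Function.update_of_ne ?_ _ _
  exact (Finset.univ.nodup.mem_erase_iff.1 hx).1

theorem eq_of_strictMono_of_map_univ_eq {α : Type*} [LinearOrder α] {m : ℕ} {f g : Fin m → α}
    (hf : StrictMono f) (hg : StrictMono g)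
    (h : Multiset.map f univ.val = Multiset.map g univ.val) : f = g := by
  refine (hf.range_inj hg).1 (Set.ext fun x => ?_)
  simpa using congrArg (x ∈ ·) h

theorem exists_perm_eq_comp_of_map_univ_eq {α : Type*} [LinearOrder α] {m : ℕ}
    {f g : Fin m → α} (hf : Function.Injective f) (hg : Function.Injective g)
    (h : Multiset.map f univ.val = Multiset.map g univ.val) :
    ∃ σ : Equiv.Perm (Fin m), f = g ∘ σ := by
  have hsort : f ∘ Tuple.sort f = g ∘ Tuple.sort g := by
    refine eq_of_strictMono_of_map_univ_eq
      ((Tuple.monotone_sort f).strictMono_of_injective (hf.comp (Equiv.injective _)))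
      ((Tuple.monotone_sort g).strictMono_of_injective (hg.comp (Equiv.injective _))) ?_
    rw [← Multiset.map_map, ← Multiset.map_map, Multiset.map_univ_val_equiv,
      Multiset.map_univ_val_equiv, h]
  refine ⟨Tuple.sort g * (Tuple.sort f)⁻¹, funext fun j => ?_⟩
  simpa using congrFun hsort ((Tuple.sort f)⁻¹ j)

theorem Equiv.Perm.eq_one_of_strictMono {m : ℕ} {σ : Equiv.Perm (Fin m)} (h : StrictMono σ) :
    σ = 1 :=
  DFunLike.coe_injective ((h.range_inj strictMono_id).1 (by simp))

theorem sum_sq_comp_perm_sub {ι α : Type*} [Fintype ι] [CommRing α] (x y : ι → α)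
    (π : Equiv.Perm ι) :
    ∑ i, (y (π i) - x i) ^ 2 = ∑ i, y i ^ 2 + ∑ i, x i ^ 2 - 2 * ∑ i, x i * y (π i) := by
  simp only [sub_sq, Finset.sum_add_distrib, Finset.sum_sub_distrib, Finset.mul_sum,
    Equiv.sum_comp π (fun i => y i ^ 2)]
  rw [Finset.sum_congr rfl fun i _ => show 2 * y (π i) * x i = 2 * (x i * y (π i)) by ring]
  ring

section Rearrangement

variable {ι α : Type*} [Fintype ι] [CommRing α] [LinearOrder α] [IsStrictOrderedRing α]

theorem Monovary.sum_sq_sub_le_sum_sq_comp_perm_sub {x y : ι → α} (hxy : Monovary x y)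
    (π : Equiv.Perm ι) : ∑ i, (y i - x i) ^ 2 ≤ ∑ i, (y (π i) - x i) ^ 2 := by
  have h := sum_sq_comp_perm_sub x y 1
  simp only [Equiv.Perm.coe_one, id] at h
  rw [h, sum_sq_comp_perm_sub]
  linarith [hxy.sum_mul_comp_perm_le_sum_mul (σ := π)]

theorem eq_one_of_sum_sq_comp_perm_sub_eq {m : ℕ} {x y : Fin m → α} (hx : StrictMono x)
    (hy : StrictMono y) {π : Equiv.Perm (Fin m)}
    (h : ∑ i, (y (π i) - x i) ^ 2 = ∑ i, (y i - x i) ^ 2) : π = 1 := by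
  have h1 := sum_sq_comp_perm_sub x y 1
  simp only [Equiv.Perm.coe_one, id] at h1
  rw [h1, sum_sq_comp_perm_sub] at h
  have hmv : Monovary x (y ∘ π) :=
    ((hx.monotone.monovary hy.monotone).sum_mul_comp_perm_eq_sum_mul_iff).1 (by linarith)
  have hyπ : StrictMono (y ∘ π) :=
    (hx.trans_monovary hmv.symm).strictMono_of_injective (hy.injective.comp π.injective)
  exact Equiv.Perm.eq_one_of_strictMono fun i j hij => hy.lt_iff_lt.1 (hyπ hij)

end Rearrangement

/-- Summing the shift over the `π`-invariant set `{j | d j = d k}` shows that `m` divides its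
cardinality times `n`. -/
theorem Equiv.Perm.apply_eq_of_invariant_of_coprime_shift {α β : Type*} [Fintype α] {m n : ℕ}
    (hm : Fintype.card α = m) (hcop : m.Coprime n) {π : Equiv.Perm α} {f : α → ZMod m}
    (hf : ∀ j, f (π j) = f j + n) {d : α → β} (hd : ∀ j, d (π j) = d j) (j k : α) :
    d j = d k := by
  classical
  set s := Finset.univ.filter (fun i => d i = d k)
  have hsum : ∑ i ∈ s, f (π i) = ∑ i ∈ s, f i :=
    Finset.sum_equiv π (fun i => by simp [s, hd]) (fun _ _ => rfl)
  have hdvd : m ∣ #s * n := by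
    simp only [hf, Finset.sum_add_distrib, Finset.sum_const, nsmul_eq_mul, add_eq_left] at hsum
    exact (ZMod.natCast_eq_zero_iff _ _).1 (by exact_mod_cast hsum)
  have hcard : #s = Fintype.card α := by
    have hpos : 0 < #s := Finset.card_pos.2 ⟨k, by simp [s]⟩
    exact le_antisymm (Finset.card_le_univ s)
      (hm ▸ Nat.le_of_dvd hpos (hcop.dvd_of_dvd_mul_right hdvd))
  have hj : j ∈ s := Finset.eq_univ_of_card s hcard ▸ Finset.mem_univ j
  simpa [s] using hj

theorem Nat.card_subtype_comp_eq_of_injective {X W : Type*} [Finite X] {A B : X → W}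
    (hB : Function.Injective B) (hAB : ∀ x, ∃ y, A y = B x) (P : W → Prop) :
    Nat.card {x // P (A x)} = Nat.card {x // P (B x)} := by
  choose Φ hΦ using hAB
  have hΦbij : Function.Bijective Φ :=
    Finite.injective_iff_bijective.1 fun x y h => hB (by rw [← hΦ, ← hΦ, h])
  exact (Nat.card_congr ((Equiv.ofBijective Φ hΦbij).subtypeEquiv fun x => by simp [hΦ])).symm

namespace ParkingTuple

variable {m n : ℕ}

theorem pos (t : ParkingTuple m n) : 0 < m := by
  obtain ⟨j, -⟩ := t.zero_min
  exact j.pos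

theorem ext {t t' : ParkingTuple m n} (hr : t.r = t'.r) (hrem : t.removed = t'.removed) :
    t = t' := by
  cases t; cases t'; cases hr; cases hrem; rfl

section

variable (t : ParkingTuple m n)

theorem eq_of_intCast_r_eq (i : Fin (n + 1)) {j k : Fin m}
    (h : ((t.r i j : ℤ) : ZMod m) = t.r i k) : j = k :=
  (t.res i k j ((ZMod.intCast_eq_intCast_iff_dvd_sub _ _ _).1 h)).symm

theorem r_injective (i : Fin (n + 1)) : Function.Injective (t.r i) :=
  fun _ _ h => t.eq_of_intCast_r_eq i (congrArg _ h)

theorem strictMono_r (i : Fin (n + 1)) : StrictMono (t.r i) :=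
  (t.mono i).strictMono_of_injective (t.r_injective i)

theorem r_zero_eq_zero {j : Fin m} (hj : (j : ℕ) = 0) : t.r 0 j = 0 := by
  obtain ⟨k, hk⟩ := t.zero_min
  have := t.mono 0 (show j ≤ k from Fin.le_def.2 (by omega))
  linarith [t.nonneg j]

noncomputable def removedIdx (i : Fin n) : Fin m :=
  (Multiset.mem_map.1 (t.mem i)).choose

theorem r_removedIdx (i : Fin n) : t.r i.castSucc (t.removedIdx i) = t.removed i :=
  (Multiset.mem_map.1 (t.mem i)).choose_spec.2

theorem brank_eq_removedIdx (i : Fin n) : Brank t i = t.removedIdx i := by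
  simp [Brank, ← t.r_removedIdx i, (t.strictMono_r _).lt_iff_lt, Finset.filter_gt_eq_Iio]

theorem brank_lt (i : Fin n) : Brank t i < m :=
  t.brank_eq_removedIdx i ▸ (t.removedIdx i).isLt

/-- Row `i.castSucc` with its removed level raised by `m`: row `i.succ` before sorting. -/
noncomputable def bump (i : Fin n) (k : Fin m) : ℤ :=
  t.r i.castSucc k + if k = t.removedIdx i then (m : ℤ) else 0

theorem intCast_bump (i : Fin n) (k : Fin m) :
    ((t.bump i k : ℤ) : ZMod m) = t.r i.castSucc k := by
  simp [bump, apply_ite]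

theorem bump_injective (i : Fin n) : Function.Injective (t.bump i) :=
  fun j k h => t.eq_of_intCast_r_eq _ (by rw [← t.intCast_bump, h, t.intCast_bump])

theorem exists_perm_r_succ_eq_bump (i : Fin n) :
    ∃ σ : Equiv.Perm (Fin m), t.r i.succ = t.bump i ∘ σ := by
  refine exists_perm_eq_comp_of_map_univ_eq (t.r_injective _) (t.bump_injective i) ?_
  have hbump :
      t.bump i = Function.update (t.r i.castSucc) (t.removedIdx i) (t.removed i + m) := by
    funext k
    rcases eq_or_ne k (t.removedIdx i) with rfl | hk
    · simp [bump, t.r_removedIdx]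
    · simp [bump, hk]
  rw [t.step, hbump, Multiset.map_update_univ (t.r_injective _), t.r_removedIdx]

theorem sum_mul_r_succ_le {w : Fin m → ℤ} (hw : Antitone w) (i : Fin n) :
    ∑ j, w j * t.r i.succ j ≤ ∑ j, w j * t.r i.castSucc j + w (t.removedIdx i) * m := by
  obtain ⟨σ, hσ⟩ := t.exists_perm_r_succ_eq_bump i
  calc ∑ j, w j * t.r i.succ j ≤ ∑ j, w j * t.r i.succ (σ⁻¹ j) :=
        (hw.antivary (t.mono _)).sum_mul_le_sum_mul_comp_perm
    _ = ∑ j, w j * t.bump i j := by simp [hσ]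
    _ = _ := by simp [bump, mul_add, Finset.sum_add_distrib]

theorem brank_isParkingWord : IsParkingWord m n (Brank t) := by
  refine ⟨t.brank_lt, fun R _ hR => ?_⟩
  -- `∑ j, w j * t.r k j` is the sum of the `R` smallest levels of row `k`.
  set w : Fin m → ℤ := fun j => if (j : ℕ) < R then 1 else 0
  have hw : Antitone w := fun j k hjk => by
    simp only [w]; split_ifs <;> omega
  have hlast : ∑ j, w j * t.r (Fin.last n) j - ∑ j, w j * t.r 0 j = R * n := by
    simp [w, t.last, mul_add, Finset.sum_add_distrib, Finset.sum_ite, Fin.card_filter_val_lt, hR]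
  have hsteps := Finset.sum_le_sum fun i (_ : i ∈ Finset.univ) => sub_le_iff_le_add'.2
    (t.sum_mul_r_succ_le hw i)
  rw [Fin.sum_univ_succ_sub_castSucc (fun i => ∑ j, w j * t.r i j), hlast] at hsteps
  have hcount : ∑ i : Fin n, w (t.removedIdx i) * m = m * #{i | Brank t i < R} := by
    simp [w, t.brank_eq_removedIdx, Finset.sum_ite, mul_comm]
  exact_mod_cast hsteps.trans_eq hcount

end

section SameRanks

variable {t t' : ParkingTuple m n} {i : Fin n} (hJ : t.removedIdx i = t'.removedIdx i)
  {σ τ : Equiv.Perm (Fin m)} (hσ : t.r i.succ = t.bump i ∘ σ)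
  (hτ : t'.r i.succ = t'.bump i ∘ τ)

include hJ in
theorem bump_sub_bump (k : Fin m) :
    t'.bump i k - t.bump i k = t'.r i.castSucc k - t.r i.castSucc k := by
  simp only [bump, hJ]; ring

include hJ hσ hτ in
theorem sum_sq_sub_r_castSucc :
    ∑ j, (t'.r i.castSucc j - t.r i.castSucc j) ^ 2 =
      ∑ j, (t'.r i.succ ((τ⁻¹ * σ) j) - t.r i.succ j) ^ 2 := by
  simp_rw [← bump_sub_bump hJ, ← Equiv.sum_comp σ (fun k => (t'.bump i k - t.bump i k) ^ 2),
    hσ, hτ]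
  simp

include hJ hσ hτ in
theorem sum_sq_sub_r_succ_le :
    ∑ j, (t'.r i.succ j - t.r i.succ j) ^ 2 ≤
      ∑ j, (t'.r i.castSucc j - t.r i.castSucc j) ^ 2 :=
  (sum_sq_sub_r_castSucc hJ hσ hτ).symm ▸
    ((t.mono _).monovary (t'.mono _)).sum_sq_sub_le_sum_sq_comp_perm_sub _

include hJ hσ hτ in
theorem eq_of_sum_sq_sub_r_succ_eq
    (h : ∑ j, (t'.r i.succ j - t.r i.succ j) ^ 2 =
      ∑ j, (t'.r i.castSucc j - t.r i.castSucc j) ^ 2) :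
    σ = τ := by
  rw [sum_sq_sub_r_castSucc hJ hσ hτ] at h
  have := eq_one_of_sum_sq_comp_perm_sub_eq (t.strictMono_r _) (t'.strictMono_r _) h.symm
  rwa [inv_mul_eq_one, eq_comm] at this

end SameRanks

/-- `π j` is the position in the first row of the level that has moved to position `j` of
row `k`. -/
theorem exists_perm_sub_r_eq_and_intCast_r_eq {t t' : ParkingTuple m n}
    (hJ : ∀ i, t.removedIdx i = t'.removedIdx i) {σ : Fin n → Equiv.Perm (Fin m)}
    (hσ : ∀ i, t.r i.succ = t.bump i ∘ σ i) (hσ' : ∀ i, t'.r i.succ = t'.bump i ∘ σ i)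
    (k : Fin (n + 1)) :
    ∃ π : Equiv.Perm (Fin m), ∀ j, t'.r k j - t.r k j = t'.r 0 (π j) - t.r 0 (π j) ∧
      ((t.r k j : ℤ) : ZMod m) = t.r 0 (π j) := by
  induction k using Fin.induction with
  | zero => exact ⟨1, fun j => ⟨rfl, rfl⟩⟩
  | succ i ih =>
    obtain ⟨π, hπ⟩ := ih
    refine ⟨π * σ i, fun j => ⟨?_, ?_⟩⟩
    · rw [hσ, hσ', Function.comp_apply, Function.comp_apply, bump_sub_bump (hJ i)]
      exact (hπ _).1
    · rw [hσ, Function.comp_apply, t.intCast_bump]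
      exact (hπ _).2

theorem brank_injective (hcop : m.Coprime n) :
    Function.Injective (Brank : ParkingTuple m n → Fin n → ℕ) := by
  intro t t' h
  have hJ : ∀ i, t.removedIdx i = t'.removedIdx i := fun i =>
    Fin.ext (by rw [← brank_eq_removedIdx, ← brank_eq_removedIdx, h])
  choose σ hσ using t.exists_perm_r_succ_eq_bump
  choose τ hτ using t'.exists_perm_r_succ_eq_bump
  set D : Fin (n + 1) → ℤ := fun k => ∑ j, (t'.r k j - t.r k j) ^ 2
  have hD : Antitone D :=
    Fin.antitone_iff_succ_le.2 fun i => sum_sq_sub_r_succ_le (hJ i) (hσ i) (hτ i)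
  have hDconst : ∀ k, D k = D 0 := fun k =>
    le_antisymm (hD (Fin.zero_le k)) (by simpa [D, t.last, t'.last] using hD (Fin.le_last k))
  have hστ : σ = τ := funext fun i => eq_of_sum_sq_sub_r_succ_eq (hJ i) (hσ i) (hτ i)
    ((hDconst _).trans (hDconst _).symm)
  subst hστ
  have hr0 : t.r 0 = t'.r 0 := by
    obtain ⟨π, hπ⟩ := exists_perm_sub_r_eq_and_intCast_r_eq hJ hσ hτ (Fin.last n)
    have hconst := Equiv.Perm.apply_eq_of_invariant_of_coprime_shift (Fintype.card_fin m) hcop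
      (f := fun j => ((t.r 0 j : ℤ) : ZMod m)) (π := π) (d := fun j => t'.r 0 j - t.r 0 j)
      (fun j => by simpa [t.last] using (hπ j).2.symm)
      (fun j => by simpa [t.last, t'.last] using (hπ j).1.symm)
    funext j
    linarith [hconst j ⟨0, t.pos⟩, t.r_zero_eq_zero (j := ⟨0, t.pos⟩) rfl,
      t'.r_zero_eq_zero (j := ⟨0, t.pos⟩) rfl]
  have hr : t.r = t'.r := funext fun k => funext fun j => by
    obtain ⟨π, hπ⟩ := exists_perm_sub_r_eq_and_intCast_r_eq hJ hσ hτ k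
    linarith [(hπ j).1, congrFun hr0 (π j)]
  refine ext hr (funext fun i => ?_)
  rw [← t.r_removedIdx, ← t'.r_removedIdx, hr, hJ]

theorem finite (hcop : m.Coprime n) : Finite (ParkingTuple m n) :=
  Finite.of_injective (fun t i => (⟨Brank t i, t.brank_lt i⟩ : Fin m)) fun _ _ h =>
    brank_injective hcop (funext fun i => congrArg Fin.val (congrFun h i))

theorem exists_of_unsorted_rows (c : Fin (n + 1) → Fin m → ℤ) (J : Fin n → Fin m)
    (hres : ∀ k j j', ((c k j : ℤ) : ZMod m) = c k j' → j = j')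
    (hnonneg : ∀ j, 0 ≤ c 0 j) (hzero : ∃ j, c 0 j = 0)
    (hclosed : ∀ j, ∃ j' : Fin m, ∃ l : ℕ, c 0 j + n = c 0 j' + l * m)
    (hstep : ∀ i j, c i.succ j = c i.castSucc j + if j = J i then (m : ℤ) else 0)
    (hlast : Multiset.map (c (Fin.last n)) univ.val =
      Multiset.map (fun j => c 0 j + n) univ.val) :
    ∃ t : ParkingTuple m n, ∀ i, t.removed i = c i.castSucc (J i) := by
  have hinj : ∀ k, Function.Injective (c k) := fun k j j' h => hres k j j' (congrArg _ h)
  have hmap : ∀ k,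
      Multiset.map (c k ∘ Tuple.sort (c k)) univ.val = Multiset.map (c k) univ.val :=
    fun k => by rw [← Multiset.map_map, Multiset.map_univ_val_equiv]
  have hsorted : ∀ k, StrictMono (c k ∘ Tuple.sort (c k)) := fun k =>
    (Tuple.monotone_sort _).strictMono_of_injective ((hinj k).comp (Equiv.injective _))
  refine ⟨{
    r := fun k => c k ∘ Tuple.sort (c k)
    removed := fun i => c i.castSucc (J i)
    mono := fun k => (hsorted k).monotone
    res := fun k j j' h => (Tuple.sort (c k)).injective
      (hres k _ _ ((ZMod.intCast_eq_intCast_iff_dvd_sub _ _ _).2 h)).symm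
    nonneg := fun j => hnonneg _
    zero_min := by
      obtain ⟨j, hj⟩ := hzero
      exact ⟨(Tuple.sort (c 0)).symm j, by simpa using hj⟩
    closed := fun j => by
      obtain ⟨j', l, h⟩ := hclosed (Tuple.sort (c 0) j)
      exact ⟨(Tuple.sort (c 0)).symm j', l, by simpa using h⟩
    mem := fun i => Multiset.mem_map.2
      ⟨(Tuple.sort (c i.castSucc)).symm (J i), Finset.mem_univ_val _, by simp⟩
    step := fun i => by
      have hupd : c i.succ = Function.update (c i.castSucc) (J i) (c i.castSucc (J i) + m) := by
        funext j
        rcases eq_or_ne j (J i) with rfl | hj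
        · simp [hstep]
        · simp [hstep, hj]
      rw [hmap, hmap, hupd, Multiset.map_update_univ (hinj _)]
    last := fun j => by
      have hshift : StrictMono fun j => (c 0 ∘ Tuple.sort (c 0)) j + n :=
        fun _ _ h => add_lt_add_left (hsorted 0 h) _
      refine congrFun (eq_of_strictMono_of_map_univ_eq (hsorted _) hshift ?_) j
      rw [hmap, hlast]
      simpa [Multiset.map_map, Function.comp_def] using
        (congrArg (Multiset.map (· + (n : ℤ))) (hmap 0)).symm }, fun _ => rfl⟩

end ParkingTuple

section WordRows

variable {m n : ℕ} (p : Fin n → ℕ)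

/-- `m` times the height, above the diagonal from `(0, 0)` to `(m, n)`, of the lattice path of
`p` after `u` columns; the parking condition says exactly that it is nonnegative. -/
def wordLevel (m n : ℕ) (p : Fin n → ℕ) (u : ℕ) : ℤ := m * #{i | p i < u} - u * n

theorem wordLevel_zero : wordLevel m n p 0 = 0 := by simp [wordLevel]

theorem wordLevel_nonneg (hp : IsParkingWord m n p) {u : ℕ} (hu : u ≤ m) :
    0 ≤ wordLevel m n p u := by
  rcases Nat.eq_zero_or_pos u with rfl | hu0
  · rw [wordLevel_zero]
  · have := hp.2 u hu0 hu
    simp only [wordLevel, sub_nonneg]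
    exact_mod_cast this

theorem wordLevel_succ (u : ℕ) :
    wordLevel m n p (u + 1) = wordLevel m n p u + m * #{i | p i = u} - n := by
  have hsplit : #{i | p i < u + 1} = #{i | p i < u} + #{i | p i = u} := by
    rw [← Finset.card_union_of_disjoint (Finset.disjoint_filter.2 fun _ _ h h' => by omega),
      ← Finset.filter_or]
    congr 1; ext i; simp; omega
  simp only [wordLevel, hsplit]
  push_cast; ring

theorem wordLevel_finRotate (hp : ∀ i, p i < m) (u : Fin m) :
    wordLevel m n p (finRotate m u) = wordLevel m n p ((u : ℕ) + 1) := by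
  obtain ⟨m, rfl⟩ : ∃ m', m = m' + 1 := ⟨m - 1, by have := u.pos; omega⟩
  rw [coe_finRotate]
  split_ifs with hu
  · have hall : #{i | p i < m + 1} = n := by
      rw [Finset.filter_true_of_mem fun i _ => hp i]; simp
    rw [wordLevel_zero]
    simp only [wordLevel, hu, Fin.val_last, hall]
    push_cast; ring
  · rfl

/-- Row `k`, indexed by columns instead of sorted, of the tuple realising `p`: column `u` starts
at `wordLevel m n p u` and is raised by `m` for each of the first `k` letters equal to `u`. -/
def wordRow (m n : ℕ) (p : Fin n → ℕ) (k : Fin (n + 1)) (u : Fin m) : ℤ :=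
  wordLevel m n p u + m * #{i : Fin n | i.castSucc < k ∧ p i = u}

theorem wordRow_zero (u : Fin m) : wordRow m n p 0 u = wordLevel m n p u := by
  simp [wordRow]

theorem wordRow_succ (i : Fin n) (u : Fin m) :
    wordRow m n p i.succ u = wordRow m n p i.castSucc u + if p i = u then (m : ℤ) else 0 := by
  simp only [wordRow, Fin.castSucc_lt_succ_iff, Fin.castSucc_lt_castSucc_iff,
    Finset.card_filter_le_and]
  split_ifs <;> push_cast <;> ring

theorem wordRow_last (hp : ∀ i, p i < m) (u : Fin m) :
    wordRow m n p (Fin.last n) u = wordLevel m n p (finRotate m u) + n := by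
  rw [wordLevel_finRotate p hp, wordLevel_succ]
  simp [wordRow, Fin.castSucc_lt_last]

theorem exists_wordRow_zero_add_eq (hp : ∀ i, p i < m) (j : Fin m) :
    ∃ j' : Fin m, ∃ l : ℕ, wordRow m n p 0 j + n = wordRow m n p 0 j' + l * m := by
  refine ⟨(finRotate m).symm j, #{i | p i = (finRotate m).symm j}, ?_⟩
  have := wordLevel_finRotate p hp ((finRotate m).symm j)
  rw [Equiv.apply_symm_apply, wordLevel_succ] at this
  rw [wordRow_zero, wordRow_zero, this]
  ring

theorem map_wordRow_last (hp : ∀ i, p i < m) :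
    Multiset.map (wordRow m n p (Fin.last n)) univ.val =
      Multiset.map (fun u => wordRow m n p 0 u + n) univ.val := by
  simp only [funext (wordRow_last p hp), wordRow_zero]
  conv_rhs => rw [← Multiset.map_univ_val_equiv (finRotate m), Multiset.map_map]
  rfl

variable {a : ℤ} (ha : (m : ℤ) ∣ a * n + 1)
include ha

theorem intCast_mul_wordRow (k : Fin (n + 1)) (u : Fin m) :
    ((a * wordRow m n p k u : ℤ) : ZMod m) = u := by
  have han : (a : ZMod m) * n = -1 := by
    have := (ZMod.intCast_zmod_eq_zero_iff_dvd _ _).2 ha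
    push_cast at this
    linear_combination this
  push_cast
  simp only [wordRow, wordLevel]
  push_cast
  rw [ZMod.natCast_self]
  linear_combination (-(u : ZMod m)) * han

theorem eq_of_intCast_wordRow_eq {k : Fin (n + 1)} {u v : Fin m}
    (h : ((wordRow m n p k u : ℤ) : ZMod m) = wordRow m n p k v) : u = v := by
  have := congrArg ((a : ZMod m) * ·) h
  simp only [← Int.cast_mul, intCast_mul_wordRow p ha] at this
  exact Fin.ext (by simpa [Nat.mod_eq_of_lt] using (ZMod.natCast_eq_natCast_iff' _ _ _).1 this)

theorem emod_mul_wordRow (k : Fin (n + 1)) (u : Fin m) : a * wordRow m n p k u % m = u := by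
  rw [(ZMod.intCast_eq_intCast_iff' _ _ _).1 ((intCast_mul_wordRow p ha k u).trans
    (Int.cast_natCast (u : ℕ)).symm),
    Int.emod_eq_of_lt (by positivity) (by exact_mod_cast u.isLt)]

end WordRows

theorem ParkingTuple.exists_aword_eq {m n : ℕ} (hm : 0 < m) {a : ℤ}
    (ha : (m : ℤ) ∣ a * n + 1) {p : Fin n → ℕ} (hp : IsParkingWord m n p) :
    ∃ t : ParkingTuple m n, Aword a t = p := by
  obtain ⟨t, ht⟩ := exists_of_unsorted_rows (wordRow m n p) (fun i => ⟨p i, hp.1 i⟩)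
    (fun _ _ _ => eq_of_intCast_wordRow_eq p ha)
    (fun u => by rw [wordRow_zero]; exact wordLevel_nonneg p hp u.isLt.le)
    ⟨⟨0, hm⟩, by rw [wordRow_zero]; exact wordLevel_zero p⟩
    (exists_wordRow_zero_add_eq p hp.1)
    (fun i u => by simp [wordRow_succ, Fin.ext_iff, eq_comm])
    (map_wordRow_last p hp.1)
  exact ⟨t, funext fun i => by simp [Aword, ht, emod_mul_wordRow p ha]⟩

theorem area_dinv_equidistributed_general (m n : ℕ)
    (hcop : Nat.Coprime m n) (a : ℤ) (ha : (m : ℤ) ∣ a * (n : ℤ) + 1) :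
    ∀ k : ℤ,
      Nat.card {t : ParkingTuple m n //
        (((m : ℤ) - 1) * ((n : ℤ) - 1)) / 2 - (∑ i, (Aword a t i : ℤ)) = k} =
      Nat.card {t : ParkingTuple m n //
        (((m : ℤ) - 1) * ((n : ℤ) - 1)) / 2 - (∑ i, (Brank t i : ℤ)) = k} := by
  intro k
  have := ParkingTuple.finite hcop
  exact Nat.card_subtype_comp_eq_of_injective (ParkingTuple.brank_injective hcop)
    (fun t => ParkingTuple.exists_aword_eq t.pos ha t.brank_isParkingWord)
    (fun w => ((m : ℤ) - 1) * ((n : ℤ) - 1) / 2 - ∑ i, (w i : ℤ) = k)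

/-- Equidistribution of area and dinv on (m,n)-parking words:
`area = (m-1)(n-1)/2 - ∑ A(𝔭)_i` and `dinv = (m-1)(n-1)/2 - ∑ B(𝔭)_i` have the
same distribution, where `A` and `B` are the two bijections from parking
(m,n)-filter tuples to (m,n)-parking words (so the composite `ζ = B ∘ A⁻¹`
is a bijection of the set of parking words witnessing
`∑_p q^{area(p)} = ∑_p q^{dinv(p)}`). -/
theorem area_dinv_equidistributed (m n : ℕ) (hm : 0 < m) (hn : 0 < n)
    (hcop : Nat.Coprime m n) (a : ℤ) (ha : (m : ℤ) ∣ a * (n : ℤ) + 1) :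
    ∀ k : ℤ,
      Nat.card {t : ParkingTuple m n //
        (((m : ℤ) - 1) * ((n : ℤ) - 1)) / 2 - (∑ i, (Aword a t i : ℤ)) = k} =
      Nat.card {t : ParkingTuple m n //
        (((m : ℤ) - 1) * ((n : ℤ) - 1)) / 2 - (∑ i, (Brank t i : ℤ)) = k} :=
  area_dinv_equidistributed_general m n hcop a ha
end
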